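/- arXiv:2106.15990 — 8 statements merged into one kernel-verified Lean document; each statement's English description precedes it below -/
import Mathlib

section
/- Let f ∈ L¹(R³) be nonnegative with f(ξ) = 0 for ξ₁ > 0, ∫ f dξ = 1, and ∫ ξ₁⁻² f(ξ) dξ < ∞. Define V(φ) = ∫₀^φ (ρ_i(ψ) − n_e(ψ)) dψ where ρ_i(φ) = ∫ f(ξ)(−ξ₁)/√(ξ₁²+2φ) dξ and n_e ∈ C²(R) with n_e(0)=1, n_e'(0)=−1. Then V ∈ C²([0,φ_b]) for any φ_b > 0, V(0) = 0, V'(0) = 0, and V''(0) = 1 − ∫ ξ₁⁻² f(ξ) dξ. -/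
/-!
The kernel `-x / √(x² + 2ψ)` is bounded by `1` and its `ψ`-derivative `x / √(x² + 2ψ)³` by
`1 / x²`, uniformly in `ψ ≥ 0`. Dominated convergence therefore makes the ion density `ρ_i`
continuous on `[0, ∞)` and differentiable on `(0, ∞)`, with a derivative that extends
continuously to `0`; since the kernel is singular at `x = ψ = 0`, the one-sided derivative at `0`
is obtained as this limit. So `ρ_i` is `C¹` on `[0, ∞)`, and `V`, a primitive of `ρ_i - n_e`,
is `C²` there.
On the support `x < 0` of `f` the kernel at `ψ = 0` is `1` and its derivative is `-1 / x²`,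
which gives `V'(0) = 1 - n_e(0)` and `V''(0) = -∫ f / x² - n_e'(0)`.
-/

open MeasureTheory Real Set Filter Topology

section Calculus

variable {E : Type*} [NormedAddCommGroup E] [NormedSpace ℝ E]

theorem contDiffOn_succ_of_hasDerivWithinAt {s : Set ℝ} (hs : UniqueDiffOn ℝ s)
    {f f' : ℝ → E} {n : ℕ} (hf : ∀ x ∈ s, HasDerivWithinAt f (f' x) s x)
    (hf' : ContDiffOn ℝ n f' s) :
    ContDiffOn ℝ (n + 1) f s := by
  rw [contDiffOn_succ_iff_derivWithin hs]
  exact ⟨fun x hx => (hf x hx).differentiableWithinAt, by simp,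
    hf'.congr fun x hx => (hf x hx).derivWithin (hs x hx)⟩

theorem hasDerivWithinAt_Ici_of_hasDerivAt_Ioi {g g' : ℝ → E} {a x : ℝ}
    (hg : ContinuousOn g (Ici a)) (hg' : ContinuousOn g' (Ici a))
    (hderiv : ∀ y ∈ Ioi a, HasDerivAt g (g' y) y) (hx : a ≤ x) :
    HasDerivWithinAt g (g' x) (Ici a) x := by
  rcases hx.eq_or_lt with rfl | hx
  · refine hasDerivWithinAt_Ici_of_tendsto_deriv
      (fun y hy => (hderiv y hy).differentiableAt.differentiableWithinAt)
      ((hg a self_mem_Ici).mono Ioi_subset_Ici_self) self_mem_nhdsWithin ?_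
    refine ((hg' a self_mem_Ici).mono Ioi_subset_Ici_self).tendsto.congr' ?_
    filter_upwards [self_mem_nhdsWithin] with y hy using (hderiv y hy).deriv.symm
  · exact (hderiv x hx).hasDerivWithinAt

theorem hasDerivWithinAt_integral_Ici [CompleteSpace E] {g : ℝ → E} {a x : ℝ}
    (hg : ContinuousOn g (Ici a)) (hx : a ≤ x) :
    HasDerivWithinAt (fun φ => ∫ t in a..φ, g t) (g x) (Ici a) x := by
  have hint : IntervalIntegrable g volume a x :=
    (hg.mono (by rw [uIcc_of_le hx]; exact Icc_subset_Ici_self)).intervalIntegrable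
  have hmeas : AEStronglyMeasurable g (volume.restrict (Ici a)) :=
    hg.aestronglyMeasurable measurableSet_Ici
  rcases hx.eq_or_lt with rfl | hx
  · exact intervalIntegral.integral_hasDerivWithinAt_right hint
      ⟨Ici a, mem_of_superset self_mem_nhdsWithin Ioi_subset_Ici_self, hmeas⟩
      ((hg a self_mem_Ici).mono Ioi_subset_Ici_self)
  · exact (intervalIntegral.integral_hasDerivAt_right hint ⟨Ici a, Ici_mem_nhds hx, hmeas⟩
      ((hg x hx.le).continuousAt (Ici_mem_nhds hx))).hasDerivWithinAt

end Calculus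

section Kernel

noncomputable def ionKernel (x ψ : ℝ) : ℝ := -x / √(x ^ 2 + 2 * ψ)

noncomputable def ionKernelDeriv (x ψ : ℝ) : ℝ := x / √(x ^ 2 + 2 * ψ) ^ 3

variable {x ψ : ℝ}

theorem abs_le_sqrt_sq_add_two_mul (hψ : 0 ≤ ψ) : |x| ≤ √(x ^ 2 + 2 * ψ) :=
  abs_le_sqrt (by linarith)

theorem abs_ionKernel_le_one (hψ : 0 ≤ ψ) : |ionKernel x ψ| ≤ 1 := by
  rw [ionKernel, abs_div, abs_neg, abs_of_nonneg (sqrt_nonneg _)]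
  exact div_le_one_of_le₀ (abs_le_sqrt_sq_add_two_mul hψ) (sqrt_nonneg _)

theorem abs_ionKernelDeriv_le (hψ : 0 ≤ ψ) : |ionKernelDeriv x ψ| ≤ 1 / x ^ 2 := by
  rcases eq_or_ne x 0 with rfl | hx
  · simp [ionKernelDeriv]
  rw [ionKernelDeriv, abs_div, abs_pow, abs_of_nonneg (sqrt_nonneg _)]
  calc |x| / √(x ^ 2 + 2 * ψ) ^ 3 ≤ |x| / |x| ^ 3 := by
        gcongr
        exact abs_le_sqrt_sq_add_two_mul hψ
    _ = 1 / x ^ 2 := by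
        rw [← sq_abs x]
        field_simp

theorem norm_mul_ionKernel_le (y : ℝ) (hψ : 0 ≤ ψ) : ‖y * ionKernel x ψ‖ ≤ ‖y‖ := by
  rw [norm_mul, Real.norm_eq_abs (ionKernel _ _)]
  exact mul_le_of_le_one_right (norm_nonneg _) (abs_ionKernel_le_one hψ)

theorem norm_mul_ionKernelDeriv_le (y : ℝ) (hψ : 0 ≤ ψ) :
    ‖y * ionKernelDeriv x ψ‖ ≤ ‖y / x ^ 2‖ := by
  rw [norm_mul, norm_div, norm_pow, Real.norm_eq_abs x, sq_abs, div_eq_mul_one_div]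
  exact mul_le_mul_of_nonneg_left (abs_ionKernelDeriv_le hψ) (norm_nonneg _)

theorem continuousOn_ionKernel (x : ℝ) : ContinuousOn (ionKernel x) (Ici 0) := by
  rcases eq_or_ne x 0 with rfl | hx
  · exact (continuousOn_const (c := 0)).congr fun ψ _ => by simp [ionKernel]
  · refine ContinuousOn.div (by fun_prop) (by fun_prop) fun ψ (hψ : 0 ≤ ψ) => ?_
    exact (sqrt_pos.2 (by positivity)).ne'

theorem continuousOn_ionKernelDeriv (x : ℝ) : ContinuousOn (ionKernelDeriv x) (Ici 0) := by
  rcases eq_or_ne x 0 with rfl | hx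
  · exact (continuousOn_const (c := 0)).congr fun ψ _ => by simp [ionKernelDeriv]
  · refine ContinuousOn.div (by fun_prop) (by fun_prop) fun ψ (hψ : 0 ≤ ψ) => ?_
    exact pow_ne_zero 3 (sqrt_pos.2 (by positivity)).ne'

theorem hasDerivAt_ionKernel (h : 0 < x ^ 2 + 2 * ψ) :
    HasDerivAt (ionKernel x) (ionKernelDeriv x ψ) ψ := by
  have hsqrt : HasDerivAt (fun t => √(x ^ 2 + 2 * t)) (1 / √(x ^ 2 + 2 * ψ)) ψ :=
    (((hasDerivAt_id ψ).const_mul 2).const_add (x ^ 2)).sqrt h.ne'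
      |>.congr_deriv (by simp only [id]; field_simp)
  refine ((hasDerivAt_const ψ (-x)).div hsqrt (sqrt_pos.2 h).ne').congr_deriv ?_
  rw [ionKernelDeriv, pow_succ (√(x ^ 2 + 2 * ψ)) 2, sq_sqrt h.le]
  field_simp
  ring

theorem ionKernel_zero_of_neg (hx : x < 0) : ionKernel x 0 = 1 := by
  rw [ionKernel, mul_zero, add_zero, sqrt_sq_eq_abs, abs_of_neg hx,
    div_self (neg_ne_zero.2 hx.ne)]

theorem ionKernelDeriv_zero_of_nonpos (hx : x ≤ 0) : ionKernelDeriv x 0 = -(1 / x ^ 2) := by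
  rcases hx.eq_or_lt with rfl | hx
  · simp [ionKernelDeriv]
  rw [ionKernelDeriv, mul_zero, add_zero, sqrt_sq_eq_abs, abs_of_neg hx]
  field_simp

end Kernel

section IonDensity

variable {α : Type*} [MeasurableSpace α] {μ : Measure α} {f p : α → ℝ}

noncomputable def ionDensity (μ : Measure α) (f p : α → ℝ) (ψ : ℝ) : ℝ :=
  ∫ a, f a * ionKernel (p a) ψ ∂μ

noncomputable def ionDensityDeriv (μ : Measure α) (f p : α → ℝ) (ψ : ℝ) : ℝ :=
  ∫ a, f a * ionKernelDeriv (p a) ψ ∂μ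

theorem aestronglyMeasurable_mul_ionKernel (hf : AEStronglyMeasurable f μ) (hp : AEMeasurable p μ)
    (ψ : ℝ) : AEStronglyMeasurable (fun a => f a * ionKernel (p a) ψ) μ :=
  hf.mul ((by unfold ionKernel; fun_prop : Measurable (ionKernel · ψ)).comp_aemeasurable
    hp).aestronglyMeasurable

theorem aestronglyMeasurable_mul_ionKernelDeriv (hf : AEStronglyMeasurable f μ)
    (hp : AEMeasurable p μ) (ψ : ℝ) :
    AEStronglyMeasurable (fun a => f a * ionKernelDeriv (p a) ψ) μ :=
  hf.mul ((by unfold ionKernelDeriv; fun_prop : Measurable (ionKernelDeriv · ψ)).comp_aemeasurable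
    hp).aestronglyMeasurable

theorem continuousOn_ionDensity (hf : Integrable f μ) (hp : AEMeasurable p μ) :
    ContinuousOn (ionDensity μ f p) (Ici 0) :=
  continuousOn_of_dominated (fun ψ _ => aestronglyMeasurable_mul_ionKernel hf.1 hp ψ)
    (fun _ hψ => ae_of_all _ fun a => norm_mul_ionKernel_le (f a) hψ) hf.norm
    (ae_of_all _ fun a => continuousOn_const.mul (continuousOn_ionKernel (p a)))

theorem continuousOn_ionDensityDeriv (hf : AEStronglyMeasurable f μ) (hp : AEMeasurable p μ)
    (hf2 : Integrable (fun a => f a / p a ^ 2) μ) :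
    ContinuousOn (ionDensityDeriv μ f p) (Ici 0) :=
  continuousOn_of_dominated (fun ψ _ => aestronglyMeasurable_mul_ionKernelDeriv hf hp ψ)
    (fun _ hψ => ae_of_all _ fun a => norm_mul_ionKernelDeriv_le (f a) hψ) hf2.norm
    (ae_of_all _ fun a => continuousOn_const.mul (continuousOn_ionKernelDeriv (p a)))

theorem hasDerivAt_ionDensity (hf : Integrable f μ) (hp : AEMeasurable p μ)
    (hf2 : Integrable (fun a => f a / p a ^ 2) μ) {ψ : ℝ} (hψ : 0 < ψ) :
    HasDerivAt (ionDensity μ f p) (ionDensityDeriv μ f p ψ) ψ := by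
  refine (hasDerivAt_integral_of_dominated_loc_of_deriv_le (Ioi_mem_nhds hψ)
    (F := fun t a => f a * ionKernel (p a) t) (F' := fun t a => f a * ionKernelDeriv (p a) t)
    (.of_forall (aestronglyMeasurable_mul_ionKernel hf.1 hp))
    (hf.mono (aestronglyMeasurable_mul_ionKernel hf.1 hp ψ)
      (ae_of_all _ fun a => norm_mul_ionKernel_le (f a) hψ.le))
    (aestronglyMeasurable_mul_ionKernelDeriv hf.1 hp ψ)
    (ae_of_all _ fun a t (ht : 0 < t) => norm_mul_ionKernelDeriv_le (f a) ht.le) hf2.norm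
    (ae_of_all _ fun a t (ht : 0 < t) => ?_)).2
  exact (hasDerivAt_ionKernel (by positivity)).const_mul (f a)

theorem hasDerivWithinAt_ionDensity (hf : Integrable f μ) (hp : AEMeasurable p μ)
    (hf2 : Integrable (fun a => f a / p a ^ 2) μ) {ψ : ℝ} (hψ : 0 ≤ ψ) :
    HasDerivWithinAt (ionDensity μ f p) (ionDensityDeriv μ f p ψ) (Ici 0) ψ :=
  hasDerivWithinAt_Ici_of_hasDerivAt_Ioi (continuousOn_ionDensity hf hp)
    (continuousOn_ionDensityDeriv hf.1 hp hf2)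
    (fun _ ht => hasDerivAt_ionDensity hf hp hf2 ht) hψ

theorem ionDensity_zero (hp0 : ∀ᵐ a ∂μ, p a ≠ 0) (hfvan : ∀ a, 0 < p a → f a = 0) :
    ionDensity μ f p 0 = ∫ a, f a ∂μ := by
  refine integral_congr_ae ?_
  filter_upwards [hp0] with a ha
  rcases ha.lt_or_gt with ha | ha
  · rw [ionKernel_zero_of_neg ha, mul_one]
  · simp [hfvan a ha]

theorem ionDensityDeriv_zero (hfvan : ∀ a, 0 < p a → f a = 0) :
    ionDensityDeriv μ f p 0 = -∫ a, f a / p a ^ 2 ∂μ := by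
  rw [ionDensityDeriv, ← integral_neg]
  refine integral_congr_ae (ae_of_all _ fun a => ?_)
  rcases le_or_gt (p a) 0 with ha | ha
  · simp only [ionKernelDeriv_zero_of_nonpos ha]
    ring
  · simp [hfvan a ha]

end IonDensity

theorem V_C2_and_derivs_general
    (f : ℝ × ℝ × ℝ → ℝ) (hf : Integrable f)
    (hfvan : ∀ ξ : ℝ × ℝ × ℝ, 0 < ξ.1 → f ξ = 0)
    (hfmass : ∫ ξ : ℝ × ℝ × ℝ, f ξ = 1)
    (hf2 : Integrable (fun ξ : ℝ × ℝ × ℝ => f ξ / ξ.1 ^ 2))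
    (n_e : ℝ → ℝ) (hne : ContDiff ℝ 2 n_e) (hne0 : n_e 0 = 1)
    (hne1 : deriv n_e 0 = -1)
    (V : ℝ → ℝ)
    (hV : V = fun φ => ∫ ψ in (0:ℝ)..φ,
      ((∫ ξ : ℝ × ℝ × ℝ, f ξ * (-ξ.1 / Real.sqrt (ξ.1 ^ 2 + 2 * ψ))) - n_e ψ)) :
    (∀ φ_b > (0:ℝ), ContDiffOn ℝ 2 V (Icc 0 φ_b)) ∧
    V 0 = 0 ∧
    derivWithin V (Ici 0) 0 = 0 ∧
    derivWithin (fun φ => derivWithin V (Ici 0) φ) (Ici 0) 0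
      = 1 - ∫ ξ : ℝ × ℝ × ℝ, f ξ / ξ.1 ^ 2 := by
  set ρ := ionDensity volume f Prod.fst
  set ρ' := ionDensityDeriv volume f Prod.fst
  have hVg : V = fun φ => ∫ ψ in (0:ℝ)..φ, ρ ψ - n_e ψ := hV
  have hρ0 : ρ 0 = 1 := hfmass ▸
    ionDensity_zero (Measure.quasiMeasurePreserving_fst.ae (Measure.ae_ne volume 0)) hfvan
  have hρ'0 : ρ' 0 = -∫ ξ, f ξ / ξ.1 ^ 2 := ionDensityDeriv_zero hfvan
  have hg : ∀ ψ ∈ Ici (0:ℝ),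
      HasDerivWithinAt (fun t => ρ t - n_e t) (ρ' ψ - deriv n_e ψ) (Ici 0) ψ := fun ψ hψ =>
    (hasDerivWithinAt_ionDensity hf measurable_fst.aemeasurable hf2 hψ).sub
      (hne.differentiable (by norm_num) ψ).hasDerivAt.hasDerivWithinAt
  have hg'_cont : ContinuousOn (fun t => ρ' t - deriv n_e t) (Ici 0) :=
    (continuousOn_ionDensityDeriv hf.1 measurable_fst.aemeasurable hf2).sub
      (hne.continuous_deriv (by norm_num)).continuousOn
  have hV' : ∀ ψ ∈ Ici (0:ℝ), HasDerivWithinAt V (ρ ψ - n_e ψ) (Ici 0) ψ := fun ψ hψ =>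
    hVg ▸ hasDerivWithinAt_integral_Ici (fun t ht => (hg t ht).continuousWithinAt) hψ
  have hdV : EqOn (derivWithin V (Ici 0)) (fun t => ρ t - n_e t) (Ici 0) := fun ψ hψ =>
    (hV' ψ hψ).derivWithin (uniqueDiffOn_Ici 0 ψ hψ)
  refine ⟨fun φ_b _ => ?_, by simp [hVg], ?_, ?_⟩
  · exact (contDiffOn_succ_of_hasDerivWithinAt (n := 1) (uniqueDiffOn_Ici 0) hV'
      (contDiffOn_succ_of_hasDerivWithinAt (n := 0) (uniqueDiffOn_Ici 0) hg
        (contDiffOn_zero.2 hg'_cont))).mono Icc_subset_Ici_self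
  · rw [(hV' 0 self_mem_Ici).derivWithin (uniqueDiffOn_Ici 0 0 self_mem_Ici), hρ0, hne0,
      sub_self]
  · rw [derivWithin_congr hdV (hdV self_mem_Ici),
      (hg 0 self_mem_Ici).derivWithin (uniqueDiffOn_Ici 0 0 self_mem_Ici), hρ'0, hne1,
      sub_neg_eq_add, neg_add_eq_sub]

theorem V_C2_and_derivs
    (f : ℝ × ℝ × ℝ → ℝ) (hf : Integrable f) (hf0 : ∀ ξ, 0 ≤ f ξ)
    (hfvan : ∀ ξ : ℝ × ℝ × ℝ, 0 < ξ.1 → f ξ = 0)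
    (hfmass : ∫ ξ : ℝ × ℝ × ℝ, f ξ = 1)
    (hf2 : Integrable (fun ξ : ℝ × ℝ × ℝ => f ξ / ξ.1 ^ 2))
    (n_e : ℝ → ℝ) (hne : ContDiff ℝ 2 n_e) (hne0 : n_e 0 = 1)
    (hne1 : deriv n_e 0 = -1)
    (V : ℝ → ℝ)
    (hV : V = fun φ => ∫ ψ in (0:ℝ)..φ,
      ((∫ ξ : ℝ × ℝ × ℝ, f ξ * (-ξ.1 / Real.sqrt (ξ.1 ^ 2 + 2 * ψ))) - n_e ψ)) :
    (∀ φ_b > (0:ℝ), ContDiffOn ℝ 2 V (Icc 0 φ_b)) ∧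
    V 0 = 0 ∧
    derivWithin V (Ici 0) 0 = 0 ∧
    derivWithin (fun φ => derivWithin V (Ici 0) φ) (Ici 0) 0
      = 1 - ∫ ξ : ℝ × ℝ × ℝ, f ξ / ξ.1 ^ 2 :=
  V_C2_and_derivs_general f hf hfvan hfmass hf2 n_e hne hne0 hne1 V hV
end

section
/- Let V : [0,φ_b] → R be C² with V(0)=0, V'(0)=0, V''(0) ≥ 0, and V(φ) > 0 for all φ ∈ (0,φ_b]. Then the function φ ↦ √(V(φ)) is Lipschitz continuous on [0,φ_b]. -/
/-!
A nonnegative function `V` whose derivative is `C`-Lipschitz satisfies the Taylor bound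
`V y ≤ V x + V' x (y - x) + C (y - x)²`; evaluating it at the minimiser `y = x - V' x / (2C)`
of the right-hand side gives Glaeser's inequality `V'² ≤ 4 C V`, as long as that point stays in
the interval. Near `0` it does, because `V' 0 = 0` forces `|V' x| ≤ C x`; away from `0`, `V` is
bounded below by a positive constant and `V'²/V` is bounded by compactness. With `V'² ≤ 4 C V`
everywhere the Taylor bound becomes `V y ≤ (√(V x) + √C |y - x|)²`, which is the Lipschitz
estimate for `√V`.
-/

open Set NNReal

theorem Convex.abs_sub_sub_deriv_mul_le {f f' : ℝ → ℝ} {s : Set ℝ} {C : ℝ≥0} {x y : ℝ}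
    (hs : Convex ℝ s) (hf : ∀ z ∈ s, HasDerivWithinAt f (f' z) s z)
    (hf' : LipschitzOnWith C f' s) (hx : x ∈ s) (hy : y ∈ s) :
    |f y - f x - f' x * (y - x)| ≤ C * (y - x) ^ 2 := by
  have hxy : uIcc x y ⊆ s := hs.ordConnected.uIcc_subset hx hy
  have hg : ∀ z ∈ uIcc x y,
      HasDerivWithinAt (fun w => f w - f' x * w) (f' z - f' x) (uIcc x y) z := fun z hz =>
    (((hf z (hxy hz)).mono hxy).sub ((hasDerivWithinAt_id z _).const_mul (f' x))).congr_deriv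
      (by ring)
  have bound : ∀ z ∈ uIcc x y, ‖f' z - f' x‖ ≤ C * |y - x| := fun z hz =>
    calc ‖f' z - f' x‖ ≤ C * |z - x| := by
          simpa only [Real.dist_eq, Real.norm_eq_abs] using hf'.dist_le_mul z (hxy hz) x hx
      _ ≤ C * |y - x| := mul_le_mul_of_nonneg_left (abs_sub_left_of_mem_uIcc hz) C.2
  have := convex_uIcc x y |>.norm_image_sub_le_of_norm_hasDerivWithin_le hg bound
    left_mem_uIcc right_mem_uIcc
  rw [Real.norm_eq_abs, Real.norm_eq_abs] at this
  calc |f y - f x - f' x * (y - x)| = |f y - f' x * y - (f x - f' x * x)| := by ring_nf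
    _ ≤ C * |y - x| * |y - x| := this
    _ = C * (y - x) ^ 2 := by rw [mul_assoc, ← sq, sq_abs]

theorem sq_le_four_mul_of_nonneg_of_le_quadratic {f : ℝ → ℝ} {s : Set ℝ} {a b C x : ℝ}
    (hC : 0 < C) (hf : ∀ y ∈ s, 0 ≤ f y)
    (hquad : ∀ y ∈ s, f y ≤ a + b * (y - x) + C * (y - x) ^ 2)
    (hmin : x - b / (2 * C) ∈ s) : b ^ 2 ≤ 4 * C * a := by
  have h := (hf _ hmin).trans (hquad _ hmin)
  set t := b / (2 * C)
  have hb : b = 2 * C * t := by simp only [t]; field_simp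
  rw [sub_sub_cancel_left, hb] at h
  rw [hb]
  nlinarith

theorem sq_le_four_mul_of_abs_le_mul {f : ℝ → ℝ} {a b C x r : ℝ} (hC : 0 < C)
    (hf : ∀ y ∈ Icc 0 r, 0 ≤ f y)
    (hquad : ∀ y ∈ Icc 0 r, f y ≤ a + b * (y - x) + C * (y - x) ^ 2)
    (hb : |b| ≤ C * x) (hxr : 2 * x ≤ r) : b ^ 2 ≤ 4 * C * a := by
  have hstep : |b / (2 * C)| ≤ x / 2 := by
    rw [abs_div, abs_of_pos (by positivity : 0 < 2 * C), div_le_iff₀ (by positivity)]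
    linarith
  have hx : 0 ≤ x := (mul_nonneg_iff_of_pos_left hC).1 ((abs_nonneg b).trans hb)
  refine sq_le_four_mul_of_nonneg_of_le_quadratic hC hf hquad ⟨?_, ?_⟩ <;>
    linarith [abs_le.1 hstep]

theorem IsCompact.exists_sq_le_mul {α : Type*} [TopologicalSpace α] {f g : α → ℝ} {s : Set α}
    (hs : IsCompact s) (hf : ContinuousOn f s) (hg : ContinuousOn g s)
    (hpos : ∀ x ∈ s, 0 < f x) : ∃ L : ℝ≥0, ∀ x ∈ s, g x ^ 2 ≤ L * f x := by
  obtain ⟨L, hL⟩ := hs.exists_bound_of_continuousOn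
    ((hg.pow 2).div hf fun x hx => (hpos x hx).ne')
  refine ⟨L.toNNReal, fun x hx => ?_⟩
  have hratio : g x ^ 2 / f x ≤ L.toNNReal :=
    (le_abs_self _).trans ((hL x hx).trans (Real.le_coe_toNNReal L))
  exact (div_le_iff₀ (hpos x hx)).1 hratio

theorem lipschitzOnWith_sqrt_of_sq_le_mul {f f' : ℝ → ℝ} {s : Set ℝ} {K : ℝ≥0}
    (hf : ∀ x ∈ s, 0 ≤ f x)
    (hquad : ∀ x ∈ s, ∀ y ∈ s, f y ≤ f x + f' x * (y - x) + K ^ 2 * (y - x) ^ 2)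
    (hf' : ∀ x ∈ s, f' x ^ 2 ≤ 4 * K ^ 2 * f x) :
    LipschitzOnWith K (fun x => √(f x)) s := by
  refine .of_le_add_mul K fun y hy x hx => Real.sqrt_le_iff.2 ⟨by positivity, ?_⟩
  have hsq : (2 * K * √(f x)) ^ 2 = 4 * K ^ 2 * f x := by
    rw [mul_pow, Real.sq_sqrt (hf x hx)]; ring
  have hderiv : |f' x| ≤ 2 * K * √(f x) :=
    abs_le_of_sq_le_sq (hsq ▸ hf' x hx) (by positivity)
  have hlin : f' x * (y - x) ≤ 2 * K * √(f x) * |y - x| := by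
    calc f' x * (y - x) ≤ |f' x| * |y - x| := by rw [← abs_mul]; exact le_abs_self _
      _ ≤ 2 * K * √(f x) * |y - x| := by gcongr
  calc f y ≤ f x + f' x * (y - x) + K ^ 2 * (y - x) ^ 2 := hquad x hx y hy
    _ ≤ (√(f x) + K * dist y x) ^ 2 := by
      rw [Real.dist_eq, add_sq, Real.sq_sqrt (hf x hx), mul_pow, sq_abs]
      linarith

theorem sqrtV_lipschitz_general (φ_b : ℝ) (hφb : 0 < φ_b) (V : ℝ → ℝ)
    (hV : ContDiffOn ℝ 2 V (Icc 0 φ_b))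
    (hV0 : V 0 = 0)
    (hV1 : derivWithin V (Icc 0 φ_b) 0 = 0)
    (hVpos : ∀ φ ∈ Ioc (0:ℝ) φ_b, 0 < V φ) :
    ∃ K : NNReal, LipschitzOnWith K (fun φ => Real.sqrt (V φ)) (Icc 0 φ_b) := by
  set s := Icc (0:ℝ) φ_b
  set V' := derivWithin V s
  have hVnn : ∀ x ∈ s, 0 ≤ V x := fun x hx => hx.1.eq_or_lt.elim
    (fun h => h ▸ hV0.ge) (fun h => (hVpos x ⟨h, hx.2⟩).le)
  have hV' : ContDiffOn ℝ 1 V' s := hV.derivWithin (uniqueDiffOn_Icc hφb) (by norm_num)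
  obtain ⟨M, hM⟩ := hV'.exists_lipschitzOnWith one_ne_zero (convex_Icc 0 φ_b) isCompact_Icc
  have hhalf : Icc (φ_b / 2) φ_b ⊆ s := Icc_subset_Icc (half_pos hφb).le le_rfl
  obtain ⟨L, hL⟩ := isCompact_Icc.exists_sq_le_mul (hV.continuousOn.mono hhalf)
    (hV'.continuousOn.mono hhalf) fun x hx => hVpos x ⟨(half_pos hφb).trans_le hx.1, hx.2⟩
  set C : ℝ≥0 := M + 1 + L
  have hC : (0 : ℝ) < C := by positivity
  have hLip : LipschitzOnWith C V' s := hM.weaken (le_add_right (le_add_right le_rfl))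
  have hquad : ∀ x ∈ s, ∀ y ∈ s, V y ≤ V x + V' x * (y - x) + C * (y - x) ^ 2 :=
    fun x hx y hy => by
      have := (convex_Icc 0 φ_b).abs_sub_sub_deriv_mul_le
        (fun z hz => ((hV.differentiableOn (by norm_num)) z hz).hasDerivWithinAt) hLip hx hy
      linarith [le_abs_self (V y - V x - V' x * (y - x))]
  have hglaeser : ∀ x ∈ s, V' x ^ 2 ≤ 4 * C * V x := by
    intro x hx
    rcases le_total x (φ_b / 2) with hx' | hx'
    · have hslope : |V' x| ≤ C * x := by
        simpa [Real.dist_eq, hV1, abs_of_nonneg hx.1, V'] using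
          hLip.dist_le_mul x hx 0 ⟨le_rfl, hφb.le⟩
      exact sq_le_four_mul_of_abs_le_mul hC hVnn (hquad x hx) hslope (by linarith)
    · have hLC : (L : ℝ) ≤ 4 * C := by
        linarith [NNReal.coe_le_coe.2 (le_add_self : L ≤ C), C.2]
      calc V' x ^ 2 ≤ L * V x := hL x ⟨hx', hx.2⟩
        _ ≤ 4 * C * V x := mul_le_mul_of_nonneg_right hLC (hVnn x hx)
  have hK : ((NNReal.sqrt C : ℝ≥0) : ℝ) ^ 2 = C := by rw [← NNReal.coe_pow, NNReal.sq_sqrt]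
  exact ⟨NNReal.sqrt C, lipschitzOnWith_sqrt_of_sq_le_mul (f' := V') hVnn (hK ▸ hquad)
    (hK ▸ hglaeser)⟩

theorem sqrtV_lipschitz (φ_b : ℝ) (hφb : 0 < φ_b) (V : ℝ → ℝ)
    (hV : ContDiffOn ℝ 2 V (Icc 0 φ_b))
    (hV0 : V 0 = 0)
    (hV1 : derivWithin V (Icc 0 φ_b) 0 = 0)
    (hV2 : 0 ≤ derivWithin (fun φ => derivWithin V (Icc 0 φ_b) φ) (Icc 0 φ_b) 0)
    (hVpos : ∀ φ ∈ Ioc (0:ℝ) φ_b, 0 < V φ) :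
    ∃ K : NNReal, LipschitzOnWith K (fun φ => Real.sqrt (V φ)) (Icc 0 φ_b) :=
  sqrtV_lipschitz_general φ_b hφb V hV hV0 hV1 hVpos
end

section
/- Let V : [0,φ_b] → R be Lipschitz, with V(φ) > 0 for φ ∈ (0,φ_b], V(0) = 0, and suppose √V is Lipschitz on [0,φ_b]. Then the initial value problem φ'(x) = −√(2V(φ(x))), φ(0) = φ_b has a unique solution φ ∈ C¹([0,∞)) which is strictly decreasing, satisfies 0 < φ(x) ≤ φ_b for all x ≥ 0, and φ(x) → 0 as x → ∞. -/
/-!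
Clamping the argument of `V` to `[0, φ_b]` (`Set.IccExtend`) turns `φ ↦ -√(2 V φ)` into a globally
Lipschitz, bounded vector field `F` on `ℝ` that vanishes at `0` and is negative on `(0, ∞)`.
Picard–Lindelöf on `[-n, n]` and uniqueness glue to a global solution `γ` with `γ 0 = φ_b`.
Since `0` is an equilibrium, uniqueness keeps `γ` away from `0`, so `γ` is positive and strictly
decreasing; its limit must be an equilibrium (mean value theorem on `[t, t + 1]`), hence `0`.
Solutions of the original problem take values in `(0, φ_b]`, where `F = -√(2 V)`, so they all
solve `φ' = F(φ)`, and uniqueness for Lipschitz fields gives the second claim.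
-/

open Set Filter Topology Bornology
open scoped NNReal

section AutonomousODE

variable {E : Type*} [NormedAddCommGroup E] [NormedSpace ℝ E] {f : E → E} {K : ℝ≥0}

theorem exists_forall_mem_Ioo_hasDerivAt_of_lipschitzWith [CompleteSpace E]
    (hf : LipschitzWith K f) {L : ℝ≥0} (hL : ∀ x, ‖f x‖ ≤ L) (x₀ : E) (T : ℝ≥0) :
    ∃ γ : ℝ → E, γ 0 = x₀ ∧ ∀ t ∈ Ioo (-(T : ℝ)) T, HasDerivAt γ (f (γ t)) t := by
  have hPL : IsPicardLindelof (fun _ => f) (tmin := -(T : ℝ)) (tmax := T)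
      ⟨0, by simp⟩ x₀ (L * T) 0 L K :=
    { lipschitzOnWith := fun _ _ => hf.lipschitzOnWith
      continuousOn := fun _ _ => continuousOn_const
      norm_le := fun _ _ x _ => hL x
      mul_max_le := by simp }
  obtain ⟨γ, hγ0, hγ⟩ := hPL.exists_eq_forall_mem_Icc_hasDerivWithinAt₀
  exact ⟨γ, hγ0, fun t ht => (hγ t (Ioo_subset_Icc_self ht)).hasDerivAt (Icc_mem_nhds ht.1 ht.2)⟩

theorem exists_isIntegralCurve_of_lipschitzWith_of_isBounded_range [CompleteSpace E]
    (hf : LipschitzWith K f) (hbdd : IsBounded (range f)) (x₀ : E) :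
    ∃ γ : ℝ → E, γ 0 = x₀ ∧ IsIntegralCurve γ (fun _ => f) := by
  obtain ⟨L, hL₀, hL⟩ := hbdd.exists_pos_norm_le
  choose γ hγ0 hγ using fun n : ℕ =>
    exists_forall_mem_Ioo_hasDerivAt_of_lipschitzWith hf (L := ⟨L, hL₀.le⟩)
      (fun x => hL _ (mem_range_self x)) x₀ n
  simp only [NNReal.coe_natCast] at hγ
  have agree : ∀ m n : ℕ, ∀ t : ℝ, |t| < m → |t| < n → γ m t = γ n t := by
    intro m n t hm hn
    have hk : |t| < min (m : ℝ) n := lt_min hm hn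
    have hk₀ : 0 < min (m : ℝ) n := (abs_nonneg t).trans_lt hk
    have hsol : ∀ p : ℕ, min (m : ℝ) n ≤ p → ∀ s ∈ Ioo (-min (m : ℝ) n) (min (m : ℝ) n),
        HasDerivAt (γ p) (f (γ p s)) s ∧ γ p s ∈ univ := fun p hp s hs =>
      ⟨hγ p s ⟨by linarith [hs.1], by linarith [hs.2]⟩, trivial⟩
    exact ODE_solution_unique_of_mem_Ioo (v := fun _ => f) (fun _ _ => hf.lipschitzOnWith)
      (t₀ := 0) ⟨neg_lt_zero.2 hk₀, hk₀⟩ (hsol m (min_le_left _ _)) (hsol n (min_le_right _ _))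
      ((hγ0 m).trans (hγ0 n).symm) (abs_lt.1 hk)
  have hlevel : ∀ t : ℝ, |t| < ((⌊|t|⌋₊ + 1 : ℕ) : ℝ) := fun t => by
    push_cast; exact Nat.lt_floor_add_one _
  refine ⟨fun t => γ (⌊|t|⌋₊ + 1) t, (agree _ 1 0 (hlevel 0) (by simp)).trans (hγ0 1), fun t => ?_⟩
  set n := ⌊|t|⌋₊ + 1
  have ht := abs_lt.1 (hlevel t)
  have hnear : (fun s => γ (⌊|s|⌋₊ + 1) s) =ᶠ[𝓝 t] γ n := by
    filter_upwards [Ioo_mem_nhds ht.1 ht.2] with s hs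
    exact agree _ n s (hlevel s) (abs_lt.2 hs)
  simpa only [hnear.eq_of_nhds] using (hγ n t ht).congr_of_eventuallyEq hnear

theorem IsIntegralCurve.eq_const_of_apply_eq (hf : LipschitzWith K f) {γ : ℝ → E} {p : E}
    (hp : f p = 0) (hγ : IsIntegralCurve γ (fun _ => f)) {t₀ : ℝ} (ht₀ : γ t₀ = p) :
    γ = fun _ => p :=
  ODE_solution_unique_univ (s := fun _ => univ) (fun _ => hf.lipschitzOnWith)
    (fun t => ⟨hγ t, trivial⟩) (fun t => ⟨hp ▸ hasDerivAt_const t p, trivial⟩) ht₀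

theorem eqOn_Ici_of_isIntegralCurveOn (hf : LipschitzWith K f) {u v : ℝ → E} {a : ℝ}
    (hu : IsIntegralCurveOn u (fun _ => f) (Ici a)) (hv : IsIntegralCurveOn v (fun _ => f) (Ici a))
    (ha : u a = v a) : EqOn u v (Ici a) := fun _ hx =>
  ODE_solution_unique (fun _ => hf)
    (hu.continuousOn.mono Icc_subset_Ici_self) (fun t ht => (hu t ht.1).mono (Ici_subset_Ici.2 ht.1))
    (hv.continuousOn.mono Icc_subset_Ici_self) (fun t ht => (hv t ht.1).mono (Ici_subset_Ici.2 ht.1))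
    ha ⟨hx, le_rfl⟩

end AutonomousODE

section ScalarAutonomousODE

variable {f : ℝ → ℝ} {γ : ℝ → ℝ}

theorem IsIntegralCurve.apply_eq_zero_of_tendsto (hγ : IsIntegralCurve γ (fun _ => f)) {L : ℝ}
    (hf : ContinuousAt f L) (hL : Tendsto γ atTop (𝓝 L)) : f L = 0 := by
  have hslope : ∀ t, ∃ ξ ∈ Ioo t (t + 1), f (γ ξ) = (γ (t + 1) - γ t) / (t + 1 - t) := fun t =>
    exists_hasDerivAt_eq_slope γ _ (lt_add_one t) (hγ.continuous.continuousOn)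
      (fun s _ => hγ s)
  choose ξ hξ hξ_eq using hslope
  have hξ_top : Tendsto ξ atTop atTop := tendsto_atTop_mono (fun t => (hξ t).1.le) tendsto_id
  have hdiff : Tendsto (fun t => (γ (t + 1) - γ t) / (t + 1 - t)) atTop (𝓝 ((L - L) / 1)) := by
    simp only [add_sub_cancel_left]
    exact ((hL.comp (tendsto_atTop_add_const_right _ 1 tendsto_id)).sub hL).div_const 1
  rw [sub_self, zero_div] at hdiff
  refine tendsto_nhds_unique ?_ hdiff
  simpa only [Function.comp_def, hξ_eq] using hf.tendsto.comp (hL.comp hξ_top)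

theorem pos_of_continuous_of_ne_zero (hγ : Continuous γ) (hne : ∀ t, γ t ≠ 0) {t₀ : ℝ}
    (ht₀ : 0 < γ t₀) (t : ℝ) : 0 < γ t := by
  by_contra! ht
  obtain ⟨s, hs⟩ := intermediate_value_univ t t₀ hγ ⟨ht, ht₀.le⟩
  exact hne s hs

theorem exists_strictAnti_isIntegralCurve_tendsto_zero {K : ℝ≥0} (hf : LipschitzWith K f)
    (hbdd : IsBounded (range f)) (hf0 : f 0 = 0) (hneg : ∀ y, 0 < y → f y < 0)
    {b : ℝ} (hb : 0 < b) :
    ∃ γ : ℝ → ℝ, IsIntegralCurve γ (fun _ => f) ∧ γ 0 = b ∧ (∀ t, 0 < γ t) ∧ StrictAnti γ ∧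
      Tendsto γ atTop (𝓝 0) := by
  obtain ⟨γ, hγ0, hγ⟩ := exists_isIntegralCurve_of_lipschitzWith_of_isBounded_range hf hbdd b
  have hne : ∀ t, γ t ≠ 0 := fun t ht =>
    hb.ne' (by rw [← hγ0, hγ.eq_const_of_apply_eq hf hf0 ht])
  have hpos := pos_of_continuous_of_ne_zero hγ.continuous hne (hγ0 ▸ hb)
  have hanti : StrictAnti γ := strictAnti_of_hasDerivAt_neg hγ fun t => hneg _ (hpos t)
  have hbdd_below : BddBelow (range γ) := ⟨0, by rintro _ ⟨t, rfl⟩; exact (hpos t).le⟩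
  have hlim := tendsto_atTop_ciInf hanti.antitone hbdd_below
  have hinf_nonneg : 0 ≤ ⨅ t, γ t := le_ciInf fun t => (hpos t).le
  have hequilibrium := hγ.apply_eq_zero_of_tendsto hf.continuous.continuousAt hlim
  obtain hinf | hinf := hinf_nonneg.eq_or_lt
  · exact ⟨γ, hγ, hγ0, hpos, hanti, hinf ▸ hlim⟩
  · exact absurd hequilibrium (hneg _ hinf).ne

end ScalarAutonomousODE

section IccExtend

variable {E : Type*} [PseudoMetricSpace E] {f : ℝ → E} {K : ℝ≥0} {a b : ℝ}

theorem LipschitzOnWith.lipschitzWith_IccExtend (hf : LipschitzOnWith K f (Icc a b)) (h : a ≤ b) :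
    LipschitzWith K (IccExtend h fun p : Icc a b => f p) := by
  have := hf.to_restrict.comp (LipschitzWith.projIcc h)
  rwa [mul_one] at this

theorem LipschitzOnWith.isBounded_range_IccExtend (hf : LipschitzOnWith K f (Icc a b))
    (h : a ≤ b) : IsBounded (range (IccExtend h fun p : Icc a b => f p)) := by
  rw [IccExtend_range]
  exact (isCompact_range hf.to_restrict.continuous).isBounded

end IccExtend

theorem LipschitzOnWith.neg_sqrt_two_mul {V : ℝ → ℝ} {K : ℝ≥0} {s : Set ℝ}
    (h : LipschitzOnWith K (fun φ => √(V φ)) s) :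
    LipschitzOnWith (‖-√2‖₊ * K) (fun φ => -√(2 * V φ)) s := by
  have hfun : (fun φ => -√(2 * V φ)) = (fun y => -√2 • y) ∘ fun φ => √(V φ) := by
    ext φ; simp [Real.sqrt_mul zero_le_two]
  rw [hfun]
  exact (lipschitzWith_smul _).comp_lipschitzOnWith h

theorem ode_unique_solution_general (φ_b : ℝ) (hφb : 0 < φ_b) (V : ℝ → ℝ)
    (K' : NNReal)
    (hVpos : ∀ φ ∈ Ioc (0:ℝ) φ_b, 0 < V φ)
    (hV0 : V 0 = 0)
    (hsqrtlip : LipschitzOnWith K' (fun φ => Real.sqrt (V φ)) (Icc 0 φ_b)) :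
    (∃ φ : ℝ → ℝ,
      (∀ x ∈ Ici (0:ℝ), HasDerivWithinAt φ (-Real.sqrt (2 * V (φ x))) (Ici 0) x) ∧
      φ 0 = φ_b ∧
      StrictAntiOn φ (Ici 0) ∧
      (∀ x ∈ Ici (0:ℝ), 0 < φ x ∧ φ x ≤ φ_b) ∧
      Tendsto φ atTop (nhds 0)) ∧
    (∀ φ ψ : ℝ → ℝ,
      ((∀ x ∈ Ici (0:ℝ), HasDerivWithinAt φ (-Real.sqrt (2 * V (φ x))) (Ici 0) x) ∧
        φ 0 = φ_b ∧ StrictAntiOn φ (Ici 0) ∧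
        (∀ x ∈ Ici (0:ℝ), 0 < φ x ∧ φ x ≤ φ_b) ∧ Tendsto φ atTop (nhds 0)) →
      ((∀ x ∈ Ici (0:ℝ), HasDerivWithinAt ψ (-Real.sqrt (2 * V (ψ x))) (Ici 0) x) ∧
        ψ 0 = φ_b ∧ StrictAntiOn ψ (Ici 0) ∧
        (∀ x ∈ Ici (0:ℝ), 0 < ψ x ∧ ψ x ≤ φ_b) ∧ Tendsto ψ atTop (nhds 0)) →
      EqOn φ ψ (Ici 0)) := by
  set F := IccExtend hφb.le fun p : Icc 0 φ_b => -√(2 * V p)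
  have hFlip := hsqrtlip.neg_sqrt_two_mul.lipschitzWith_IccExtend hφb.le
  have hF : ∀ y ∈ Icc 0 φ_b, F y = -√(2 * V y) := fun y hy => IccExtend_of_mem _ _ hy
  have hF0 : F 0 = 0 := by simp [hF 0 (left_mem_Icc.2 hφb.le), hV0]
  have hFneg : ∀ y, 0 < y → F y < 0 := fun y hy => by
    have hmem : max 0 (min φ_b y) ∈ Ioc 0 φ_b :=
      ⟨lt_max_of_lt_right (lt_min hφb hy), max_le hφb.le (min_le_left _ _)⟩
    simpa [F, IccExtend_apply] using hVpos _ hmem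
  have hcurve : ∀ φ : ℝ → ℝ, (∀ x ∈ Ici (0:ℝ), HasDerivWithinAt φ (-√(2 * V (φ x))) (Ici 0) x) →
      (∀ x ∈ Ici (0:ℝ), 0 < φ x ∧ φ x ≤ φ_b) → IsIntegralCurveOn φ (fun _ => F) (Ici 0) :=
    fun φ hφ hmem x hx => by simpa only [hF (φ x) ⟨(hmem x hx).1.le, (hmem x hx).2⟩] using hφ x hx
  obtain ⟨γ, hγ, hγ0, hpos, hanti, hlim⟩ := exists_strictAnti_isIntegralCurve_tendsto_zero
    hFlip (hsqrtlip.neg_sqrt_two_mul.isBounded_range_IccExtend hφb.le) hF0 hFneg hφb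
  have hle : ∀ x ∈ Ici (0:ℝ), γ x ≤ φ_b := fun x hx => hγ0 ▸ hanti.antitone hx
  refine ⟨⟨γ, fun x hx => ?_, hγ0, hanti.strictAntiOn _, fun x hx => ⟨hpos x, hle x hx⟩, hlim⟩, ?_⟩
  · exact hF (γ x) ⟨(hpos x).le, hle x hx⟩ ▸ (hγ x).hasDerivWithinAt
  · rintro φ ψ ⟨hφ, hφ0, -, hφmem, -⟩ ⟨hψ, hψ0, -, hψmem, -⟩
    exact eqOn_Ici_of_isIntegralCurveOn hFlip (hcurve φ hφ hφmem) (hcurve ψ hψ hψmem)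
      (hφ0.trans hψ0.symm)

theorem ode_unique_solution (φ_b : ℝ) (hφb : 0 < φ_b) (V : ℝ → ℝ)
    (K K' : NNReal)
    (hVlip : LipschitzOnWith K V (Icc 0 φ_b))
    (hVpos : ∀ φ ∈ Ioc (0:ℝ) φ_b, 0 < V φ)
    (hV0 : V 0 = 0)
    (hsqrtlip : LipschitzOnWith K' (fun φ => Real.sqrt (V φ)) (Icc 0 φ_b)) :
    (∃ φ : ℝ → ℝ,
      (∀ x ∈ Ici (0:ℝ), HasDerivWithinAt φ (-Real.sqrt (2 * V (φ x))) (Ici 0) x) ∧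
      φ 0 = φ_b ∧
      StrictAntiOn φ (Ici 0) ∧
      (∀ x ∈ Ici (0:ℝ), 0 < φ x ∧ φ x ≤ φ_b) ∧
      Tendsto φ atTop (nhds 0)) ∧
    (∀ φ ψ : ℝ → ℝ,
      ((∀ x ∈ Ici (0:ℝ), HasDerivWithinAt φ (-Real.sqrt (2 * V (φ x))) (Ici 0) x) ∧
        φ 0 = φ_b ∧ StrictAntiOn φ (Ici 0) ∧
        (∀ x ∈ Ici (0:ℝ), 0 < φ x ∧ φ x ≤ φ_b) ∧ Tendsto φ atTop (nhds 0)) →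
      ((∀ x ∈ Ici (0:ℝ), HasDerivWithinAt ψ (-Real.sqrt (2 * V (ψ x))) (Ici 0) x) ∧
        ψ 0 = φ_b ∧ StrictAntiOn ψ (Ici 0) ∧
        (∀ x ∈ Ici (0:ℝ), 0 < ψ x ∧ ψ x ≤ φ_b) ∧ Tendsto ψ atTop (nhds 0)) →
      EqOn φ ψ (Ici 0)) :=
  ode_unique_solution_general φ_b hφb V K' hVpos hV0 hsqrtlip
end

section
/- Let φ ∈ C(\overline{R₊}) be strictly decreasing with φ(0) = φ_b > 0 and lim_{x→∞} φ(x) = 0, and let f_∞ ∈ L¹(R³) be nonnegative with f_∞(ξ) = 0 for ξ₁ > 0. Define f(x,ξ) = f_∞(−√(ξ₁² − 2φ(x)), ξ') χ(ξ₁² − 2φ(x)) χ(−ξ₁). Then f ∈ C(\overline{R₊}; L¹(R³)), i.e., the map x ↦ f(x,·) is continuous from [0,∞) into L¹(R³), and ‖f(x,·) − f_∞‖_{L¹(R³)} → 0 as x → ∞. -/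
open MeasureTheory Real Set Filter Topology
open scoped ENNReal

/-!
For `c ≥ 0` the substitution `ζ₁ = -√(ξ₁² - 2c)` maps `{ξ₁ < -√(2c)}` onto `{ζ₁ < 0}` with
Jacobian `|ξ₁| / |ζ₁| ≥ 1`, so `h ↦ h(-√(ξ₁² - 2c), ξ') χ(-√(2c) - ξ₁)` is a contraction of `L¹`,
and `f(x, ·)` is its value at `c = φ(x) ≥ 0`, `h = f_∞`. For continuous compactly supported `h`
the dependence on `c` is `L¹`-continuous by dominated convergence; the uniform bound and the
density of such `h` extend this to all of `L¹`. Composing with `φ` gives continuity in `x`, and the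
limit `x → ∞` is the case `c → 0`, where the transport is the identity on functions vanishing for
`ξ₁ > 0`.
-/

noncomputable section

namespace TransportedDensity

lemma neg_sqrt_sq_sub_of_neg {c t : ℝ} (hc : 0 ≤ c) (ht : t < 0) :
    -√((-√(t ^ 2 + 2 * c)) ^ 2 - 2 * c) = t := by
  rw [neg_sq, sq_sqrt (by positivity), add_sub_cancel_right, sqrt_sq_eq_abs, abs_of_neg ht,
    neg_neg]

lemma lt_neg_sqrt_iff {c x : ℝ} (hc : 0 ≤ c) : x < -√(2 * c) ↔ 0 < x ^ 2 - 2 * c ∧ 0 < -x := by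
  constructor
  · intro hx
    have hx' : 0 < -x := by linarith [sqrt_nonneg (2 * c)]
    exact ⟨by nlinarith [sqrt_nonneg (2 * c), sq_sqrt (by linarith : (0 : ℝ) ≤ 2 * c)], hx'⟩
  · rintro ⟨hsq, hx⟩
    have : √(2 * c) < -x := (sqrt_lt' hx).2 (by linarith [neg_sq x])
    linarith

lemma strictMonoOn_neg_sqrt_sq_add {c : ℝ} (hc : 0 ≤ c) :
    StrictMonoOn (fun t => -√(t ^ 2 + 2 * c)) (Iio 0) := by
  intro a ha b hb hab
  have : b ^ 2 < a ^ 2 := by nlinarith [mem_Iio.1 hb]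
  simp only [neg_lt_neg_iff]
  exact sqrt_lt_sqrt (by nlinarith [mem_Iio.1 hb]) (by linarith)

lemma image_neg_sqrt_sq_add {c : ℝ} (hc : 0 ≤ c) :
    (fun t => -√(t ^ 2 + 2 * c)) '' Iio 0 = Iio (-√(2 * c)) := by
  ext x
  constructor
  · rintro ⟨t, ht, rfl⟩
    have : √(2 * c) < √(t ^ 2 + 2 * c) :=
      sqrt_lt_sqrt (by linarith) (by nlinarith [mem_Iio.1 ht])
    exact neg_lt_neg this
  · intro hx
    obtain ⟨hsq, hneg⟩ := (lt_neg_sqrt_iff hc).1 hx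
    refine ⟨-√(x ^ 2 - 2 * c), neg_lt_zero.2 (sqrt_pos.2 hsq), ?_⟩
    change -√((-√(x ^ 2 - 2 * c)) ^ 2 + 2 * c) = x
    rw [neg_sq, sq_sqrt hsq.le, sub_add_cancel, sqrt_sq_eq_abs, abs_of_neg (by linarith), neg_neg]

lemma hasDerivAt_neg_sqrt_sq_add {c t : ℝ} (h : 0 < t ^ 2 + 2 * c) :
    HasDerivAt (fun t => -√(t ^ 2 + 2 * c)) (-(t / √(t ^ 2 + 2 * c))) t := by
  have := ((hasDerivAt_pow 2 t).add_const (2 * c)).sqrt h.ne'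
  refine this.neg.congr_deriv ?_
  norm_num [mul_div_mul_left]

lemma lintegral_comp_neg_sqrt_sub_le {c : ℝ} (hc : 0 ≤ c) (k : ℝ → ℝ≥0∞) :
    ∫⁻ x in Iio (-√(2 * c)), k (-√(x ^ 2 - 2 * c)) ≤ ∫⁻ t, k t := by
  have hderiv : ∀ t ∈ Iio (0 : ℝ), HasDerivWithinAt (fun t => -√(t ^ 2 + 2 * c))
      (-(t / √(t ^ 2 + 2 * c))) (Iio 0) t := fun t ht =>
    (hasDerivAt_neg_sqrt_sq_add (by nlinarith [mem_Iio.1 ht])).hasDerivWithinAt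
  rw [← image_neg_sqrt_sq_add hc, lintegral_image_eq_lintegral_abs_deriv_mul measurableSet_Iio
    hderiv (strictMonoOn_neg_sqrt_sq_add hc).injOn]
  calc ∫⁻ t in Iio 0, ENNReal.ofReal |-(t / √(t ^ 2 + 2 * c))| *
        k (-√((-√(t ^ 2 + 2 * c)) ^ 2 - 2 * c))
      ≤ ∫⁻ t in Iio 0, k t := by
        refine setLIntegral_mono_ae' measurableSet_Iio (Eventually.of_forall fun t ht => ?_)
        rw [neg_sqrt_sq_sub_of_neg hc ht]
        refine mul_le_of_le_one_left zero_le (ENNReal.ofReal_le_one.2 ?_)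
        rw [abs_neg, abs_div, abs_of_nonneg (sqrt_nonneg _)]
        exact div_le_one_of_le₀ (abs_le_sqrt (by linarith)) (sqrt_nonneg _)
    _ ≤ ∫⁻ t, k t := setLIntegral_le_lintegral _ _

variable {E F : Type*}

/-- Velocity at infinity, by conservation of `ξ₁² / 2 - φ`, of a particle with velocity `ξ` at a
point where `φ = c`. -/
def incoming (c : ℝ) (ξ : ℝ × E) : ℝ × E := (-√(ξ.1 ^ 2 - 2 * c), ξ.2)

/-- For `c = φ x`, `transport c f_∞` is the density `f(x, ·)`. -/
def transport [Zero F] (c : ℝ) (h : ℝ × E → F) : ℝ × E → F :=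
  (Iio (-√(2 * c)) ×ˢ univ).indicator fun ξ => h (incoming c ξ)

lemma transport_eq_mul_ite {c : ℝ} (hc : 0 ≤ c) (h : ℝ × E → ℝ) :
    transport c h = fun ξ => h (-√(ξ.1 ^ 2 - 2 * c), ξ.2) *
      (if 0 < ξ.1 ^ 2 - 2 * c then 1 else 0) * (if 0 < -ξ.1 then 1 else 0) := by
  ext ξ
  by_cases hξ : 0 < ξ.1 ^ 2 - 2 * c ∧ 0 < -ξ.1
  · rw [transport, indicator_of_mem (show ξ ∈ Iio (-√(2 * c)) ×ˢ univ from
      ⟨(lt_neg_sqrt_iff hc).2 hξ, mem_univ _⟩),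
      if_pos hξ.1, if_pos hξ.2, mul_one, mul_one, incoming]
  · rw [transport, indicator_of_notMem fun hmem => hξ ((lt_neg_sqrt_iff hc).1 hmem.1)]
    rcases not_and_or.1 hξ with hξ | hξ <;> simp [hξ]

lemma transport_sub [AddGroup F] (c : ℝ) (h g : ℝ × E → F) :
    transport c (h - g) = transport c h - transport c g :=
  indicator_sub' _ _ _

section Measure

variable [MeasureSpace E]

@[fun_prop]
lemma measurable_incoming (c : ℝ) : Measurable (incoming (E := E) c) := by
  unfold incoming; fun_prop

lemma measurableSet_transport_domain (c : ℝ) :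
    MeasurableSet (Iio (-√(2 * c)) ×ˢ (univ : Set E)) :=
  measurableSet_Iio.prod .univ

variable [SigmaFinite (volume : Measure E)]

lemma lintegral_comp_incoming_le {c : ℝ} (hc : 0 ≤ c) {G : ℝ × E → ℝ≥0∞} (hG : Measurable G) :
    ∫⁻ ξ in Iio (-√(2 * c)) ×ˢ univ, G (incoming c ξ) ≤ ∫⁻ ζ, G ζ := by
  rw [Measure.volume_eq_prod, ← Measure.prod_restrict, Measure.restrict_univ,
    lintegral_prod (fun ξ => G (incoming c ξ)) (hG.comp (measurable_incoming c)).aemeasurable,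
    lintegral_prod _ hG.aemeasurable]
  exact lintegral_comp_neg_sqrt_sub_le hc fun t => ∫⁻ y, G (t, y)

lemma map_incoming_restrict_le {c : ℝ} (hc : 0 ≤ c) :
    (volume.restrict (Iio (-√(2 * c)) ×ˢ univ)).map (incoming (E := E) c) ≤ volume := by
  refine Measure.le_iff.2 fun s hs => ?_
  rw [Measure.map_apply (measurable_incoming c) hs, ← lintegral_indicator_one hs,
    ← lintegral_indicator_one ((measurable_incoming c) hs)]
  exact lintegral_comp_incoming_le hc (measurable_one.indicator hs)

lemma quasiMeasurePreserving_incoming {c : ℝ} (hc : 0 ≤ c) :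
    Measure.QuasiMeasurePreserving (incoming (E := E) c)
      (volume.restrict (Iio (-√(2 * c)) ×ˢ univ)) volume :=
  ⟨measurable_incoming c, Measure.absolutelyContinuous_of_le (map_incoming_restrict_le hc)⟩

lemma lintegral_transport_le {c : ℝ} (hc : 0 ≤ c) {G : ℝ × E → ℝ≥0∞} (hG : AEMeasurable G) :
    ∫⁻ ξ, transport c G ξ ≤ ∫⁻ ζ, G ζ := by
  rw [transport, lintegral_indicator (measurableSet_transport_domain c), ← lintegral_map'
    (hG.mono_ac (quasiMeasurePreserving_incoming hc).absolutelyContinuous)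
    (measurable_incoming c).aemeasurable]
  exact lintegral_mono' (map_incoming_restrict_le hc) le_rfl

variable [NormedAddCommGroup F]

lemma aestronglyMeasurable_transport {c : ℝ} (hc : 0 ≤ c) {h : ℝ × E → F}
    (hh : AEStronglyMeasurable h) : AEStronglyMeasurable (transport c h) :=
  (aestronglyMeasurable_indicator_iff (measurableSet_transport_domain c)).2
    (hh.comp_quasiMeasurePreserving (quasiMeasurePreserving_incoming hc))

lemma lintegral_enorm_transport_le {c : ℝ} (hc : 0 ≤ c) {h : ℝ × E → F}
    (hh : AEStronglyMeasurable h) : ∫⁻ ξ, ‖transport c h ξ‖ₑ ≤ ∫⁻ ζ, ‖h ζ‖ₑ := by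
  simp only [transport, enorm_indicator_eq_indicator_enorm]
  exact lintegral_transport_le hc hh.enorm

lemma integrable_transport {c : ℝ} (hc : 0 ≤ c) {h : ℝ × E → F} (hh : Integrable h) :
    Integrable (transport c h) :=
  ⟨aestronglyMeasurable_transport hc hh.1, (lintegral_enorm_transport_le hc hh.1).trans_lt hh.2⟩

lemma integral_norm_transport_le {c : ℝ} (hc : 0 ≤ c) {h : ℝ × E → F} (hh : Integrable h) :
    ∫ ξ, ‖transport c h ξ‖ ≤ ∫ ζ, ‖h ζ‖ := by
  rw [integral_norm_eq_lintegral_enorm (aestronglyMeasurable_transport hc hh.1),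
    integral_norm_eq_lintegral_enorm hh.1]
  exact ENNReal.toReal_mono hh.2.ne (lintegral_enorm_transport_le hc hh.1)

end Measure

lemma ae_fst_ne [MeasureSpace E] (a : ℝ) : ∀ᵐ ξ : ℝ × E, ξ.1 ≠ a :=
  Measure.quasiMeasurePreserving_fst.ae (Measure.ae_ne volume a)

lemma transport_zero_ae_eq [MeasureSpace E] [Zero F] {h : ℝ × E → F}
    (hvan : ∀ ξ : ℝ × E, 0 < ξ.1 → h ξ = 0) : transport 0 h =ᵐ[volume] h := by
  filter_upwards [ae_fst_ne 0] with ξ hξ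
  rcases hξ.lt_or_gt with hneg | hpos
  · have hmem : ξ ∈ Iio (-√(2 * 0)) ×ˢ (univ : Set E) := ⟨by simpa using hneg, mem_univ _⟩
    rw [transport, indicator_of_mem hmem, incoming, mul_zero, sub_zero, sqrt_sq_eq_abs,
      abs_of_neg hneg, neg_neg]
  · have hmem : ξ ∉ Iio (-√(2 * 0)) ×ˢ (univ : Set E) := fun hmem => by
      simp only [mul_zero, sqrt_zero, neg_zero, mem_prod, mem_Iio] at hmem
      linarith [hmem.1]
    rw [transport, indicator_of_notMem hmem, hvan ξ hpos]

section Topology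

variable [TopologicalSpace E]

@[fun_prop]
lemma continuous_incoming (c : ℝ) : Continuous (incoming (E := E) c) := by
  unfold incoming; fun_prop

lemma exists_isCompact_forall_support_transport_subset [Zero F] {g : ℝ × E → F}
    (hg : HasCompactSupport g) (C : ℝ) :
    ∃ B : Set (ℝ × E), IsCompact B ∧ ∀ c ≤ C, Function.support (transport c g) ⊆ B := by
  obtain ⟨R, hR⟩ := (hg.image continuous_fst).isBounded.subset_closedBall 0
  refine ⟨Icc (-√(R ^ 2 + 2 * C)) √(R ^ 2 + 2 * C) ×ˢ (Prod.snd '' tsupport g),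
    isCompact_Icc.prod (hg.image continuous_snd), fun c hc ξ hξ => ?_⟩
  rw [transport, support_indicator] at hξ
  have hK : incoming c ξ ∈ tsupport g := subset_tsupport g hξ.2
  have hR' : √(ξ.1 ^ 2 - 2 * c) ≤ R := by
    have := mem_closedBall_zero_iff.1 (hR (mem_image_of_mem Prod.fst hK))
    simp only [incoming, Real.norm_eq_abs, abs_neg] at this
    exact (le_abs_self _).trans this
  have hsq : ξ.1 ^ 2 ≤ R ^ 2 + 2 * C := by
    linarith [(sqrt_le_iff.1 hR').2]
  exact ⟨abs_le.1 (abs_le_sqrt hsq), ⟨_, hK, rfl⟩⟩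

lemma continuousAt_transport_apply [TopologicalSpace F] [Zero F] {g : ℝ × E → F}
    (hg : Continuous g) {c₀ : ℝ} {ξ : ℝ × E} (hξ : ξ.1 ≠ -√(2 * c₀)) :
    ContinuousAt (fun c => transport c g ξ) c₀ := by
  have hlim : Tendsto (fun c : ℝ => -√(2 * c)) (𝓝 c₀) (𝓝 (-√(2 * c₀))) :=
    (by fun_prop : Continuous fun c : ℝ => -√(2 * c)).tendsto c₀
  rcases hξ.lt_or_gt with hlt | hgt
  · have hcont : Continuous fun c => g (incoming c ξ) := hg.comp (by unfold incoming; fun_prop)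
    refine hcont.continuousAt.congr_of_eventuallyEq ?_
    filter_upwards [hlim.eventually (lt_mem_nhds hlt)] with c hc
    exact indicator_of_mem (show ξ ∈ Iio (-√(2 * c)) ×ˢ univ from ⟨hc, mem_univ _⟩) _
  · refine (continuousAt_const (y := (0 : F))).congr_of_eventuallyEq ?_
    filter_upwards [hlim.eventually (gt_mem_nhds hgt)] with c hc
    exact indicator_of_notMem (fun hmem => (not_lt.2 hc.le) hmem.1) _

end Topology

section Continuity

variable [MetricSpace E] [ProperSpace E] [MeasureSpace E] [BorelSpace E]
  [IsFiniteMeasureOnCompacts (volume : Measure E)] [NormedAddCommGroup F]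

lemma tendsto_integral_norm_transport_sub_of_continuous {g : ℝ × E → F} (hg : Continuous g)
    (hg_supp : HasCompactSupport g) (c₀ : ℝ) :
    Tendsto (fun c => ∫ ξ, ‖transport c g ξ - transport c₀ g ξ‖) (𝓝 c₀) (𝓝 0) := by
  obtain ⟨B, hB, hsupp⟩ := exists_isCompact_forall_support_transport_subset hg_supp (c₀ + 1)
  obtain ⟨M, hM⟩ := hg_supp.exists_bound_of_continuous hg
  have hbound : ∀ c ≤ c₀ + 1, ∀ ξ, ‖transport c g ξ‖ ≤ B.indicator (fun _ => M) ξ := by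
    intro c hc ξ
    by_cases hξ : ξ ∈ B
    · rw [indicator_of_mem hξ]
      exact (norm_indicator_le_norm_self _ _).trans (hM _)
    · rw [indicator_of_notMem hξ, Function.notMem_support.1 fun h => hξ (hsupp c hc h),
        norm_zero]
  have hmeas : ∀ c, AEStronglyMeasurable (transport c g) :=
    fun c => (hg.comp (continuous_incoming c)).aestronglyMeasurable.indicator
      (measurableSet_transport_domain c)
  have hlim := tendsto_integral_filter_of_dominated_convergence
    (F := fun c ξ => ‖transport c g ξ - transport c₀ g ξ‖) (f := fun _ => 0)
    (fun ξ => 2 * B.indicator (fun _ => M) ξ)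
    (.of_forall fun c => ((hmeas c).sub (hmeas c₀)).norm)
    ((eventually_le_nhds (lt_add_one c₀)).mono fun c hc => .of_forall fun ξ => ?_)
    (((integrable_indicator_iff hB.measurableSet).2
      (integrableOn_const hB.measure_lt_top.ne)).const_mul 2)
    ?_
  · simpa using hlim
  · rw [norm_norm, two_mul]
    exact (norm_sub_le _ _).trans (add_le_add (hbound c hc ξ) (hbound c₀ (by linarith) ξ))
  · filter_upwards [ae_fst_ne (E := E) (-√(2 * c₀))] with ξ hξ
    simpa using ((continuousAt_transport_apply hg hξ).tendsto.sub_const (transport c₀ g ξ)).norm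

lemma integral_norm_sub_le_add_add {α : Type*} [MeasurableSpace α] {μ : Measure α}
    {u v w z : α → F} (huv : Integrable (fun a => u a - v a) μ)
    (hvw : Integrable (fun a => v a - w a) μ) (hwz : Integrable (fun a => w a - z a) μ) :
    ∫ a, ‖u a - z a‖ ∂μ ≤ ∫ a, ‖u a - v a‖ ∂μ + ∫ a, ‖v a - w a‖ ∂μ + ∫ a, ‖w a - z a‖ ∂μ := by
  have huvw : Integrable (fun a => ‖u a - v a‖ + ‖v a - w a‖) μ := huv.norm.add hvw.norm
  rw [← integral_add huv.norm hvw.norm, ← integral_add huvw hwz.norm]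
  refine integral_mono_of_nonneg (.of_forall fun a => norm_nonneg _) (huvw.add hwz.norm)
    (.of_forall fun a => ?_)
  linarith [norm_sub_le_norm_sub_add_norm_sub (u a) (v a) (z a),
    norm_sub_le_norm_sub_add_norm_sub (v a) (w a) (z a)]

lemma tendsto_integral_norm_transport_sub [NormedSpace ℝ F] {h : ℝ × E → F}
    (hh : Integrable h) {c₀ : ℝ} (hc₀ : 0 ≤ c₀) :
    Tendsto (fun c => ∫ ξ, ‖transport c h ξ - transport c₀ h ξ‖) (𝓝[Ici 0] c₀) (𝓝 0) := by
  refine Metric.tendsto_nhds.2 fun ε hε => ?_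
  obtain ⟨g, hg_supp, hhg, hg, hg_int⟩ :=
    hh.exists_hasCompactSupport_integral_sub_le (div_pos hε three_pos)
  have hg_lim := Metric.tendsto_nhds.1
    (tendsto_integral_norm_transport_sub_of_continuous hg hg_supp c₀) (ε / 3) (by positivity)
  filter_upwards [nhdsWithin_le_nhds hg_lim, self_mem_nhdsWithin] with c hgc (hc : 0 ≤ c)
  rw [Real.dist_eq, sub_zero, abs_of_nonneg (integral_nonneg fun _ => norm_nonneg _)] at hgc ⊢
  have hTc := integral_norm_transport_le hc (hh.sub hg_int)
  have hTc₀ := integral_norm_transport_le hc₀ (hh.sub hg_int)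
  rw [transport_sub] at hTc hTc₀
  simp only [Pi.sub_apply] at hTc hTc₀
  calc ∫ ξ, ‖transport c h ξ - transport c₀ h ξ‖
      ≤ (∫ ξ, ‖transport c h ξ - transport c g ξ‖) +
          (∫ ξ, ‖transport c g ξ - transport c₀ g ξ‖) +
          ∫ ξ, ‖transport c₀ g ξ - transport c₀ h ξ‖ :=
        integral_norm_sub_le_add_add
          ((integrable_transport hc hh).sub (integrable_transport hc hg_int))
          ((integrable_transport hc hg_int).sub (integrable_transport hc₀ hg_int))
          ((integrable_transport hc₀ hg_int).sub (integrable_transport hc₀ hh))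
    _ < ε := by
      simp only [norm_sub_rev (transport c₀ g _)]
      linarith

end Continuity

end TransportedDensity

end

open TransportedDensity in
theorem transported_density_continuity_general
    (φ : ℝ → ℝ) (hφcont : ContinuousOn φ (Ici 0))
    (hφanti : StrictAntiOn φ (Ici 0))
    (hφlim : Tendsto φ atTop (nhds 0))
    (f_inf : ℝ × ℝ × ℝ → ℝ) (hfint : Integrable f_inf)
    (hfvan : ∀ ξ : ℝ × ℝ × ℝ, 0 < ξ.1 → f_inf ξ = 0)
    (f : ℝ → ℝ × ℝ × ℝ → ℝ)
    (hf : f = fun x ξ =>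
      f_inf (-Real.sqrt (ξ.1 ^ 2 - 2 * φ x), ξ.2) *
        (if 0 < ξ.1 ^ 2 - 2 * φ x then (1:ℝ) else 0) *
        (if 0 < -ξ.1 then (1:ℝ) else 0)) :
    (∀ x ∈ Ici (0:ℝ), Integrable (f x)) ∧
    (∀ x₀ ∈ Ici (0:ℝ),
      Tendsto (fun x => ∫ ξ : ℝ × ℝ × ℝ, |f x ξ - f x₀ ξ|)
        (nhdsWithin x₀ (Ici 0)) (nhds 0)) ∧
    Tendsto (fun x => ∫ ξ : ℝ × ℝ × ℝ, |f x ξ - f_inf ξ|) atTop (nhds 0) := by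
  have hφ_nonneg : MapsTo φ (Ici 0) (Ici 0) := fun x hx =>
    le_of_tendsto hφlim <| eventually_atTop.2
      ⟨x, fun y hy => hφanti.antitoneOn hx (mem_Ici.2 (le_trans hx hy)) hy⟩
  have hf_eq : ∀ x ∈ Ici (0 : ℝ), f x = transport (φ x) f_inf := fun x hx => by
    rw [hf, transport_eq_mul_ite (hφ_nonneg hx)]
  refine ⟨fun x hx => hf_eq x hx ▸ integrable_transport (hφ_nonneg hx) hfint,
    fun x₀ hx₀ => ?_, ?_⟩
  · refine ((tendsto_integral_norm_transport_sub hfint (hφ_nonneg hx₀)).comp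
      ((hφcont x₀ hx₀).tendsto_nhdsWithin hφ_nonneg)).congr' ?_
    filter_upwards [self_mem_nhdsWithin] with x hx
    simp only [Function.comp, hf_eq x hx, hf_eq x₀ hx₀, Real.norm_eq_abs]
  · have hφ_lim' : Tendsto φ atTop (𝓝[Ici 0] 0) :=
      tendsto_nhdsWithin_iff.2 ⟨hφlim, eventually_atTop.2 ⟨0, fun x hx => hφ_nonneg hx⟩⟩
    refine ((tendsto_integral_norm_transport_sub hfint le_rfl).comp hφ_lim').congr' ?_
    filter_upwards [eventually_ge_atTop 0] with x hx
    refine integral_congr_ae ?_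
    filter_upwards [transport_zero_ae_eq hfvan] with ξ hξ
    simp only [hf_eq x hx, hξ, Real.norm_eq_abs]

theorem transported_density_continuity (φ_b : ℝ) (hφb : 0 < φ_b)
    (φ : ℝ → ℝ) (hφcont : ContinuousOn φ (Ici 0))
    (hφanti : StrictAntiOn φ (Ici 0))
    (hφ0 : φ 0 = φ_b)
    (hφlim : Tendsto φ atTop (nhds 0))
    (f_inf : ℝ × ℝ × ℝ → ℝ) (hfint : Integrable f_inf) (hf0 : ∀ ξ, 0 ≤ f_inf ξ)
    (hfvan : ∀ ξ : ℝ × ℝ × ℝ, 0 < ξ.1 → f_inf ξ = 0)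
    (f : ℝ → ℝ × ℝ × ℝ → ℝ)
    (hf : f = fun x ξ =>
      f_inf (-Real.sqrt (ξ.1 ^ 2 - 2 * φ x), ξ.2) *
        (if 0 < ξ.1 ^ 2 - 2 * φ x then (1:ℝ) else 0) *
        (if 0 < -ξ.1 then (1:ℝ) else 0)) :
    (∀ x ∈ Ici (0:ℝ), Integrable (f x)) ∧
    (∀ x₀ ∈ Ici (0:ℝ),
      Tendsto (fun x => ∫ ξ : ℝ × ℝ × ℝ, |f x ξ - f x₀ ξ|)
        (nhdsWithin x₀ (Ici 0)) (nhds 0)) ∧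
    Tendsto (fun x => ∫ ξ : ℝ × ℝ × ℝ, |f x ξ - f_inf ξ|) atTop (nhds 0) :=
  transported_density_continuity_general φ hφcont hφanti hφlim f_inf hfint hfvan f hf
end

section
/- Let V : [0,φ_b] → R be continuous with V(0) = 0, and suppose there is a sequence φ_n ∈ (0,φ_b] with V(φ_n) = 0 and φ_n → 0. Then there is no function φ ∈ C¹(\overline{R₊}) with ∂_x φ(x) < 0 for all x, φ(0) = φ_b, lim_{x→∞} φ(x) = 0, and (∂_x φ(x))² = 2V(φ(x)) for all x ≥ 0. -/
open Set Filter

theorem nonexistence_oscillating_V (φ_b : ℝ) (hφb : 0 < φ_b)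
    (V : ℝ → ℝ) (hV : ContinuousOn V (Icc 0 φ_b)) (hV0 : V 0 = 0)
    (φn : ℕ → ℝ) (hφn : ∀ n, φn n ∈ Ioc (0:ℝ) φ_b ∧ V (φn n) = 0)
    (hφnlim : Tendsto φn atTop (nhds 0)) :
    ¬ ∃ φ : ℝ → ℝ,
        ContDiffOn ℝ 1 φ (Ici 0) ∧
        (∀ x ∈ Ici (0:ℝ), derivWithin φ (Ici 0) x < 0) ∧
        φ 0 = φ_b ∧
        Tendsto φ atTop (nhds 0) ∧
        (∀ x ∈ Ici (0:ℝ), (derivWithin φ (Ici 0) x) ^ 2 = 2 * V (φ x)) := by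
  rintro ⟨φ, hφC, hφ', hφ0, hφlim, hode⟩
  -- choose n with φn n < φ_b
  obtain ⟨n, hn⟩ := (hφnlim.eventually (eventually_lt_nhds hφb)).exists
  obtain ⟨⟨hnpos, hnle⟩, hVn⟩ := hφn n
  -- choose X ≥ 0 with φ X < φn n
  obtain ⟨X₀, hX₀⟩ := (hφlim.eventually (eventually_lt_nhds hnpos)).exists_forall_of_atTop
  set X := max X₀ 0 with hXdef
  have hX0 : (0:ℝ) ≤ X := le_max_right _ _
  have hφX : φ X < φn n := hX₀ X (le_max_left _ _)
  -- IVT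
  have hcont : ContinuousOn φ (Icc 0 X) :=
    (hφC.continuousOn).mono (Icc_subset_Ici_self)
  have hmem : φn n ∈ Icc (φ X) (φ 0) := ⟨hφX.le, hφ0 ▸ hn.le⟩
  obtain ⟨x, hx, hxeq⟩ := intermediate_value_Icc' hX0 hcont hmem
  have hxIci : x ∈ Ici (0:ℝ) := hx.1
  have := hode x hxIci
  rw [hxeq, hVn, mul_zero] at this
  have hzero : derivWithin φ (Ici 0) x = 0 := by
    have := sq_eq_zero_iff.mp this
    exact this
  exact absurd hzero (hφ' x hxIci).ne
end

section
/- Let W : [0,δ₀] → R be C¹ with W'(φ) ≥ c₀ > 0 on [0,δ₀]. Suppose ψ, φ : [0,∞) → [0,δ₀] are C² with ψ(0) = φ(0), ψ − φ ∈ H¹(R₊), and ∂_{xx}(ψ − φ) = W(ψ) − W(φ) + R(x) with sup_x |R(x)| ≤ M. Then sup_{x≥0} |ψ(x) − φ(x)| ≤ M/c₀. -/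
/-!
Let `u = ψ - φ`. Wherever `u > M / c₀`, the equation and `W' ≥ c₀` give
`u'' ≥ c₀ u - M > 0`, so `u` cannot have an interior maximum above `M / c₀`. Since `u(0) = 0`
and `u ∈ L²` forces `u` to drop below any positive level arbitrarily far out, a value of `u`
above `M / c₀` would produce such a maximum on a compact interval. The same argument with
`ψ` and `φ` exchanged gives the lower bound.
-/

open Set MeasureTheory Filter Topology

lemma MeasureTheory.MemLp.frequently_norm_lt_atTop {u : ℝ → ℝ} {a : ℝ} {p : ENNReal}
    (hu : MemLp u p (volume.restrict (Ici a))) (hp₀ : p ≠ 0) (hp : p ≠ ⊤) {c : ℝ} (hc : 0 < c) :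
    ∃ᶠ x in atTop, ‖u x‖ < c := by
  rw [frequently_atTop]
  intro x₀
  by_contra! hlarge
  have hsub : Ici (max x₀ a) ⊆ {x | c.toNNReal ≤ ‖u x‖₊} := fun x hx =>
    Real.toNNReal_le_iff_le_coe.mpr (hlarge x (le_of_max_le_left hx))
  have hinf : volume.restrict (Ici a) (Ici (max x₀ a)) = ⊤ := by
    rw [Measure.restrict_apply measurableSet_Ici,
      inter_eq_left.mpr (Ici_subset_Ici.mpr (le_max_right _ _)), Real.volume_Ici]
  exact ((measure_mono hsub).trans_lt (hu.meas_ge_lt_top hp₀ hp (by simpa using hc))).ne hinf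

lemma Convex.mul_sub_le_image_sub_of_le_derivWithin {D : Set ℝ} (hD : Convex ℝ D) {f : ℝ → ℝ}
    (hf : DifferentiableOn ℝ f D) {C : ℝ} (hf' : ∀ x ∈ interior D, C ≤ derivWithin f D x) :
    ∀ x ∈ D, ∀ y ∈ D, x ≤ y → C * (y - x) ≤ f y - f x :=
  hD.mul_sub_le_image_sub_of_le_deriv hf.continuousOn (hf.mono interior_subset) fun x hx =>
    (derivWithin_of_mem_nhds (f := f) (mem_interior_iff_mem_nhds.mp hx)) ▸ hf' x hx

lemma IsLocalMax.second_deriv_nonpos {f f' : ℝ → ℝ} {y f'' : ℝ} (hmax : IsLocalMax f y)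
    (hf : ∀ᶠ x in 𝓝 y, HasDerivAt f (f' x) x) (hf' : HasDerivAt f' f'' y) : f'' ≤ 0 := by
  by_contra! hpos
  have hf'y : f' y = 0 := hmax.hasDerivAt_eq_zero hf.self_of_nhds
  -- `f'` vanishes at `y` and increases through it, so `f` increases just to the right of `y`.
  have hright : ∀ᶠ x in 𝓝[>] y, 0 < f' x := by
    have := (hasDerivAt_iff_tendsto_slope.mp hf').eventually (eventually_gt_nhds hpos)
    filter_upwards [nhdsGT_le_nhdsNE y this, self_mem_nhdsWithin] with x hx hxy
    rw [slope_def_field, hf'y, sub_zero] at hx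
    exact (div_pos_iff_of_pos_right (sub_pos.mpr hxy)).mp hx
  obtain ⟨c, hyc, hc⟩ := (nhdsGT_basis y).eventually_iff.mp
    (hright.and (nhdsWithin_le_nhds hf))
  have hmono : StrictMonoOn f (Ico y c) := by
    refine strictMonoOn_of_deriv_pos (convex_Ico y c) ?_ ?_
    · intro x hx
      rcases hx.1.eq_or_lt with rfl | hyx
      · exact hf.self_of_nhds.continuousAt.continuousWithinAt
      · exact (hc ⟨hyx, hx.2⟩).2.continuousAt.continuousWithinAt
    · intro x hx
      rw [interior_Ico] at hx
      exact (hc hx).2.deriv ▸ (hc hx).1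
  obtain ⟨x, hxmax, hxy, hxc⟩ := ((hmax.filter_mono nhdsWithin_le_nhds).and
    (Ioo_mem_nhdsGT hyc)).exists
  exact (hmono (left_mem_Ico.mpr hyc) ⟨hxy.le, hxc⟩ hxy).not_ge hxmax

lemma le_of_frequently_lt_of_second_deriv_pos {u u' u'' : ℝ → ℝ} {l a : ℝ}
    (hcont : ContinuousOn u (Ici l)) (hl : u l ≤ a)
    (hd1 : ∀ x ∈ Ioi l, HasDerivAt u (u' x) x) (hd2 : ∀ x ∈ Ioi l, HasDerivAt u' (u'' x) x)
    (htail : ∀ b > a, ∃ᶠ x in atTop, u x < b) (hconv : ∀ x ∈ Ioi l, a < u x → 0 < u'' x) :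
    ∀ x ∈ Ici l, u x ≤ a := by
  intro x₀ hx₀
  by_contra! hx₀a
  obtain ⟨X, hx₀X, hX⟩ := frequently_atTop.mp (htail (u x₀) hx₀a) x₀
  obtain ⟨y, hy, hmax⟩ := isCompact_Icc.exists_isMaxOn (nonempty_Icc.mpr (hx₀.trans hx₀X))
    (hcont.mono Icc_subset_Ici_self)
  have hx₀y : u x₀ ≤ u y := hmax ⟨hx₀, hx₀X⟩
  have hly : l < y := hy.1.lt_of_ne (by rintro rfl; linarith)
  have hyX : y < X := hy.2.lt_of_ne (by rintro rfl; linarith)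
  have hu''y := (hmax.isLocalMax (Icc_mem_nhds hly hyX)).second_deriv_nonpos
    (eventually_of_mem (Ioi_mem_nhds hly) hd1) (hd2 y hly)
  linarith [hconv y hly (by linarith)]

lemma sub_le_div_of_second_deriv_sub_eq {S : Set ℝ} {W ψ φ ψ' φ' ψ'' φ'' R : ℝ → ℝ} {c₀ M : ℝ}
    (hc : 0 < c₀) (hM : 0 ≤ M) (hW : ∀ s ∈ S, ∀ t ∈ S, s ≤ t → c₀ * (t - s) ≤ W t - W s)
    (hψS : ∀ x ∈ Ioi (0:ℝ), ψ x ∈ S) (hφS : ∀ x ∈ Ioi (0:ℝ), φ x ∈ S)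
    (hcontψ : ContinuousOn ψ (Ici 0)) (hcontφ : ContinuousOn φ (Ici 0)) (hinit : ψ 0 = φ 0)
    (hdψ1 : ∀ x ∈ Ioi (0:ℝ), HasDerivAt ψ (ψ' x) x)
    (hdφ1 : ∀ x ∈ Ioi (0:ℝ), HasDerivAt φ (φ' x) x)
    (hdψ2 : ∀ x ∈ Ioi (0:ℝ), HasDerivAt ψ' (ψ'' x) x)
    (hdφ2 : ∀ x ∈ Ioi (0:ℝ), HasDerivAt φ' (φ'' x) x)
    (hL2 : MemLp (fun x => ψ x - φ x) 2 (volume.restrict (Ici 0)))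
    (heq : ∀ x ∈ Ioi (0:ℝ), ψ'' x - φ'' x = W (ψ x) - W (φ x) + R x)
    (hR : ∀ x ∈ Ioi (0:ℝ), -M ≤ R x) :
    ∀ x ∈ Ici (0:ℝ), ψ x - φ x ≤ M / c₀ := by
  have hMc : 0 ≤ M / c₀ := div_nonneg hM hc.le
  refine le_of_frequently_lt_of_second_deriv_pos (u'' := fun x => ψ'' x - φ'' x)
    (hcontψ.sub hcontφ) (by simpa [hinit] using hMc)
    (fun x hx => (hdψ1 x hx).sub (hdφ1 x hx)) (fun x hx => (hdψ2 x hx).sub (hdφ2 x hx))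
    (fun b hb => ?_) (fun x hx hlt => ?_)
  · exact (hL2.frequently_norm_lt_atTop two_ne_zero ENNReal.ofNat_ne_top
      (hMc.trans_lt hb)).mono fun x hx => (le_abs_self _).trans_lt hx
  · have hgrowth := hW (φ x) (hφS x hx) (ψ x) (hψS x hx) (by linarith [hMc])
    have hcu : M < c₀ * (ψ x - φ x) := by rwa [div_lt_iff₀' hc] at hlt
    linarith [heq x hx, hR x hx]

theorem comparison_estimate_general (δ₀ c₀ M : ℝ) (hc : 0 < c₀)
    (W : ℝ → ℝ) (hW : ContDiffOn ℝ 1 W (Icc 0 δ₀))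
    (hW' : ∀ φ ∈ Icc (0:ℝ) δ₀, c₀ ≤ derivWithin W (Icc 0 δ₀) φ)
    (ψ φ ψ' φ' ψ'' φ'' R : ℝ → ℝ)
    (hrangeψ : ∀ x ∈ Ici (0:ℝ), ψ x ∈ Icc 0 δ₀)
    (hrangeφ : ∀ x ∈ Ici (0:ℝ), φ x ∈ Icc 0 δ₀)
    (hdψ1 : ∀ x ∈ Ioi (0:ℝ), HasDerivAt ψ (ψ' x) x)
    (hdφ1 : ∀ x ∈ Ioi (0:ℝ), HasDerivAt φ (φ' x) x)
    (hdψ2 : ∀ x ∈ Ioi (0:ℝ), HasDerivAt ψ' (ψ'' x) x)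
    (hdφ2 : ∀ x ∈ Ioi (0:ℝ), HasDerivAt φ' (φ'' x) x)
    (hcontψ : ContinuousOn ψ (Ici 0)) (hcontφ : ContinuousOn φ (Ici 0))
    (hinit : ψ 0 = φ 0)
    (hH1a : MemLp (fun x => ψ x - φ x) 2 (volume.restrict (Ici 0)))
    (heq : ∀ x ∈ Ioi (0:ℝ), ψ'' x - φ'' x = W (ψ x) - W (φ x) + R x)
    (hR : ∀ x ∈ Ioi (0:ℝ), |R x| ≤ M) :
    ∀ x ∈ Ici (0:ℝ), |ψ x - φ x| ≤ M / c₀ := by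
  have hM : 0 ≤ M := (abs_nonneg _).trans (hR 1 (mem_Ioi.mpr one_pos))
  have hgrowth := (convex_Icc 0 δ₀).mul_sub_le_image_sub_of_le_derivWithin
    (hW.differentiableOn one_ne_zero) fun x hx => hW' x (interior_subset hx)
  have hψS : ∀ x ∈ Ioi (0:ℝ), ψ x ∈ Icc 0 δ₀ := fun x hx => hrangeψ x (Ioi_subset_Ici_self hx)
  have hφS : ∀ x ∈ Ioi (0:ℝ), φ x ∈ Icc 0 δ₀ := fun x hx => hrangeφ x (Ioi_subset_Ici_self hx)
  have hupper := sub_le_div_of_second_deriv_sub_eq hc hM hgrowth hψS hφS hcontψ hcontφ hinit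
    hdψ1 hdφ1 hdψ2 hdφ2 hH1a heq fun x hx => (abs_le.mp (hR x hx)).1
  have hlower := sub_le_div_of_second_deriv_sub_eq (R := fun x => -R x) hc hM hgrowth hφS hψS
    hcontφ hcontψ hinit.symm hdφ1 hdψ1 hdφ2 hdψ2 (by simpa [Pi.neg_def] using hH1a.neg)
    (fun x hx => by linarith [heq x hx]) fun x hx => neg_le_neg (abs_le.mp (hR x hx)).2
  intro x hx
  exact abs_sub_le_iff.mpr ⟨hupper x hx, hlower x hx⟩

theorem comparison_estimate (δ₀ c₀ M : ℝ) (hδ : 0 < δ₀) (hc : 0 < c₀) (hM : 0 ≤ M)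
    (W : ℝ → ℝ) (hW : ContDiffOn ℝ 1 W (Icc 0 δ₀))
    (hW' : ∀ φ ∈ Icc (0:ℝ) δ₀, c₀ ≤ derivWithin W (Icc 0 δ₀) φ)
    (ψ φ ψ' φ' ψ'' φ'' R : ℝ → ℝ)
    (hrangeψ : ∀ x ∈ Ici (0:ℝ), ψ x ∈ Icc 0 δ₀)
    (hrangeφ : ∀ x ∈ Ici (0:ℝ), φ x ∈ Icc 0 δ₀)
    (hdψ1 : ∀ x ∈ Ioi (0:ℝ), HasDerivAt ψ (ψ' x) x)
    (hdφ1 : ∀ x ∈ Ioi (0:ℝ), HasDerivAt φ (φ' x) x)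
    (hdψ2 : ∀ x ∈ Ioi (0:ℝ), HasDerivAt ψ' (ψ'' x) x)
    (hdφ2 : ∀ x ∈ Ioi (0:ℝ), HasDerivAt φ' (φ'' x) x)
    (hcontψ : ContinuousOn ψ (Ici 0)) (hcontφ : ContinuousOn φ (Ici 0))
    (hinit : ψ 0 = φ 0)
    (hH1a : MemLp (fun x => ψ x - φ x) 2 (volume.restrict (Ici 0)))
    (hH1b : MemLp (fun x => ψ' x - φ' x) 2 (volume.restrict (Ici 0)))
    (heq : ∀ x ∈ Ioi (0:ℝ), ψ'' x - φ'' x = W (ψ x) - W (φ x) + R x)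
    (hR : ∀ x ∈ Ioi (0:ℝ), |R x| ≤ M) :
    ∀ x ∈ Ici (0:ℝ), |ψ x - φ x| ≤ M / c₀ :=
  comparison_estimate_general δ₀ c₀ M hc W hW hW' ψ φ ψ' φ' ψ'' φ'' R hrangeψ hrangeφ hdψ1 hdφ1 hdψ2
    hdφ2 hcontψ hcontφ hinit hH1a heq hR
end

section
/- Let r > 2 with Hölder conjugate r' = r/(r−1) < 2, and let φ_b > 0, 0 ≤ φ ≤ φ_b. Then ∫_{√(2(φ_b−φ))}^{√(2φ_b)} ξ₁^{r'} / (ξ₁² + 2φ − 2φ_b)^{r'/2} dξ₁ ≤ C for a constant C depending only on r and φ_b (uniformly in φ ∈ [0, φ_b]). -/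
open Set Real intervalIntegral

theorem boundary_integral_bound (r φ_b : ℝ) (hr : 2 < r) (hφb : 0 < φ_b) :
    ∃ C > (0:ℝ), ∀ φ ∈ Icc (0:ℝ) φ_b,
      (∫ ξ₁ in Real.sqrt (2 * (φ_b - φ))..Real.sqrt (2 * φ_b),
          ξ₁ ^ (r / (r - 1)) / (ξ₁ ^ 2 + 2 * φ - 2 * φ_b) ^ ((r / (r - 1)) / 2))
        ≤ C := by
  set r' := r / (r - 1) with hr'def
  set p := r' / 2 with hpdef
  have hr1 : (0:ℝ) < r - 1 := by linarith
  have hr'1 : 1 < r' := by rw [hr'def, lt_div_iff₀ hr1]; linarith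
  have hr'2 : r' < 2 := by rw [hr'def, div_lt_iff₀ hr1]; linarith
  have hp0 : 0 < p := by rw [hpdef]; linarith
  have hp1 : p < 1 := by rw [hpdef]; linarith
  set b := Real.sqrt (2 * φ_b) with hbdef
  have hb0 : 0 < b := Real.sqrt_pos.2 (by linarith)
  have hCnn : 0 ≤ b ^ p * (b ^ (1 - p) / (1 - p)) :=
    mul_nonneg (Real.rpow_nonneg hb0.le _)
      (div_nonneg (Real.rpow_nonneg hb0.le _) (by linarith))
  refine ⟨b ^ p * (b ^ (1 - p) / (1 - p)) + 1, by linarith, ?_⟩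
  rintro φ ⟨hφ0, hφb'⟩
  set a := Real.sqrt (2 * (φ_b - φ)) with hadef
  have ha0 : 0 ≤ a := Real.sqrt_nonneg _
  have hab : a ≤ b := Real.sqrt_le_sqrt (by linarith)
  have ha2 : a ^ 2 = 2 * (φ_b - φ) := Real.sq_sqrt (by linarith)
  have hden : ∀ x : ℝ, x ^ 2 + 2 * φ - 2 * φ_b = x ^ 2 - a ^ 2 := by
    intro x; rw [ha2]; ring
  set f : ℝ → ℝ := fun x => x ^ r' / (x ^ 2 + 2 * φ - 2 * φ_b) ^ p with hfdef
  set g : ℝ → ℝ := fun x => b ^ p * (x - a) ^ (-p) with hgdef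
  have hfg : ∀ x ∈ Icc a b, f x ≤ g x := by
    rintro x ⟨hax, hxb⟩
    simp only [hfdef, hgdef, hden x]
    rcases eq_or_lt_of_le hax with h | h
    · subst h
      rw [sub_self, Real.zero_rpow (by positivity : p ≠ 0), div_zero, sub_self,
        Real.zero_rpow (by intro hc; rw [neg_eq_zero] at hc; exact hp0.ne' hc), mul_zero]
    · have hx0 : 0 < x := lt_of_le_of_lt ha0 h
      have hxa : 0 < x - a := by linarith
      have hd : x * (x - a) ≤ x ^ 2 - a ^ 2 := by nlinarith
      have hd0 : 0 < x * (x - a) := by positivity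
      have h1 : (x * (x - a)) ^ p ≤ (x ^ 2 - a ^ 2) ^ p :=
        Real.rpow_le_rpow hd0.le hd hp0.le
      have h2 : x ^ r' / (x ^ 2 - a ^ 2) ^ p ≤ x ^ r' / (x * (x - a)) ^ p := by
        apply div_le_div_of_nonneg_left _ (by positivity) h1
        positivity
      refine h2.trans ?_
      rw [Real.mul_rpow hx0.le hxa.le]
      have h3 : x ^ r' / (x ^ p * (x - a) ^ p) = x ^ p * (x - a) ^ (-p) := by
        rw [Real.rpow_neg hxa.le, div_eq_mul_inv, mul_inv, ← mul_assoc]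
        congr 1
        rw [mul_comm (x ^ r'), inv_mul_eq_div, ← Real.rpow_sub hx0]
        congr 1
        rw [hpdef]; ring
      rw [h3]
      have h4 : x ^ p ≤ b ^ p := Real.rpow_le_rpow hx0.le hxb hp0.le
      exact mul_le_mul_of_nonneg_right h4 (by positivity)
  have hbase : IntervalIntegrable (fun u : ℝ => u ^ (-p)) MeasureTheory.volume 0 (b - a) :=
    intervalIntegral.intervalIntegrable_rpow' (by linarith)
  have hshift : IntervalIntegrable (fun x : ℝ => (x - a) ^ (-p)) MeasureTheory.volume a b := by
    have := hbase.comp_sub_right a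
    simpa using this
  have hgint : IntervalIntegrable g MeasureTheory.volume a b := by
    simpa [hgdef] using hshift.const_mul (b ^ p)
  have hval0 : ∫ u in (0:ℝ)..(b - a), u ^ (-p) = (b - a) ^ (1 - p) / (1 - p) := by
    rw [integral_rpow (Or.inl (by linarith : (-1:ℝ) < -p))]
    rw [Real.zero_rpow (by intro hc; nlinarith [hc] : -p + 1 ≠ 0)]
    rw [show -p + 1 = 1 - p by ring]
    ring
  have hgval : ∫ x in a..b, g x = b ^ p * ((b - a) ^ (1 - p) / (1 - p)) := by
    simp only [hgdef]
    rw [intervalIntegral.integral_const_mul]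
    congr 1
    have := intervalIntegral.integral_comp_sub_right (a := a) (b := b)
      (fun u : ℝ => u ^ (-p)) a
    rw [this, sub_self, hval0]
  by_cases hf : IntervalIntegrable f MeasureTheory.volume a b
  · calc ∫ x in a..b, f x ≤ ∫ x in a..b, g x :=
          intervalIntegral.integral_mono_on hab hf hgint hfg
      _ = b ^ p * ((b - a) ^ (1 - p) / (1 - p)) := hgval
      _ ≤ b ^ p * (b ^ (1 - p) / (1 - p)) := by
          apply mul_le_mul_of_nonneg_left _ (by positivity)
          apply div_le_div_of_nonneg_right _ (by linarith)
          exact Real.rpow_le_rpow (by linarith) (by linarith) (by linarith)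
      _ ≤ b ^ p * (b ^ (1 - p) / (1 - p)) + 1 := by linarith
  · rw [intervalIntegral.integral_undef hf]
    linarith
end

section
/- Let M > 0, r > 2 with conjugate r' < 2, and −M ≤ φ ≤ 0. For nonnegative f ∈ L¹(R³) ∩ L^r_{loc}(R; L¹(R²)), the quantity ρ_i⁻(φ) = ∫_{R³} f(ξ) |ξ₁|/√(ξ₁² + 2φ) · χ(ξ₁² + 2φ) dξ satisfies ρ_i⁻(φ) ≤ √2 ‖f‖_{L¹(R³)} + C_M ‖f‖_{L^r(−2√M, 2√M; L¹(R²))}, where C_M depends only on M and r. -/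
/-!
Write `a = √(-2φ)`, so that the weight is `|t| / √(t² - a²)`; the cutoff `χ` comes for free,
since `√` vanishes on nonpositive reals. Where `t² ≥ 2a²`, in particular for `|t| ≥ A = 2√M`,
the weight is at most `√2`. On the slab `|t| ≤ A` we have `t² / (t² - a²) ≤ A / (|t| - a)`, and
`|t| - a` is one of `|t - a|`, `|t + a|`; hence the `p`-th power of the weight, `p = r' < 2`, is
dominated by `A^(p/2) (|t - a|^(-p/2) + |t + a|^(-p/2))`, whose integral over the slab is bounded
uniformly in `a ≤ A`. After integrating out `ξ'` (Fubini), Hölder's inequality in `ξ₁` on the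
slab gives the second term.
-/

open Set Real MeasureTheory intervalIntegral

lemma memLp_ofReal_of_integrable_rpow {α : Type*} [MeasurableSpace α] {μ : Measure α} {p : ℝ}
    (hp : 0 < p) {f : α → ℝ} (hf₀ : ∀ x, 0 ≤ f x) (hf : AEStronglyMeasurable f μ)
    (hfp : Integrable (fun x => f x ^ p) μ) : MemLp f (ENNReal.ofReal p) μ := by
  refine (integrable_norm_rpow_iff hf (by simpa using hp) ENNReal.ofReal_ne_top).1 ?_
  simpa only [ENNReal.toReal_ofReal hp.le, norm_of_nonneg (hf₀ _)] using hfp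

lemma integral_prod_mul_fst {α β : Type*} [MeasurableSpace α] [MeasurableSpace β]
    {μ : Measure α} {ν : Measure β} [SFinite μ] [SFinite ν] {f : α × β → ℝ} {w : α → ℝ}
    (h : Integrable (fun z => f z * w z.1) (μ.prod ν)) :
    Integrable (fun x => w x * ∫ y, f (x, y) ∂ν) μ ∧
      ∫ z, f z * w z.1 ∂(μ.prod ν) = ∫ x, w x * ∫ y, f (x, y) ∂ν ∂μ := by
  have hslice : (fun x => ∫ y, f (x, y) * w x ∂ν) = fun x => w x * ∫ y, f (x, y) ∂ν := by
    ext x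
    rw [MeasureTheory.integral_mul_const, mul_comm]
  exact ⟨hslice ▸ h.integral_prod_left, by rw [integral_prod _ h, hslice]⟩

lemma div_sqrt_mul_ite_pos (x y : ℝ) : x / √y * (if 0 < y then 1 else 0) = x / √y := by
  split_ifs with hy
  · rw [mul_one]
  · rw [sqrt_eq_zero'.2 (not_lt.1 hy), div_zero, zero_mul]

lemma abs_div_sqrt_sq_sub_sq_le_sqrt_two {a t : ℝ} (h : 2 * a ^ 2 ≤ t ^ 2) :
    |t| / √(t ^ 2 - a ^ 2) ≤ √2 := by
  rcases (sq_nonneg t).eq_or_lt with ht | ht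
  · simp [sq_eq_zero_iff.1 ht.symm]
  rw [div_le_iff₀ (sqrt_pos.2 (by nlinarith)), ← sqrt_mul zero_le_two, ← sqrt_sq_eq_abs]
  exact sqrt_le_sqrt (by linarith)

lemma sub_rpow_le_abs_sub_rpow_add_abs_add_rpow {a t : ℝ} (s : ℝ) (h : a ≤ |t|) :
    (|t| - a) ^ s ≤ |t - a| ^ s + |t + a| ^ s := by
  rcases le_total 0 t with ht | ht
  · rw [abs_of_nonneg ht] at h ⊢
    rw [abs_of_nonneg (sub_nonneg.2 h)]
    exact le_add_of_nonneg_right (by positivity)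
  · rw [abs_of_nonpos ht] at h ⊢
    rw [abs_of_nonpos (by linarith : t + a ≤ 0), neg_add']
    exact le_add_of_nonneg_left (by positivity)

lemma sq_div_sq_sub_sq_le {a A t : ℝ} (ha : 0 ≤ a) (hat : a < |t|) (htA : |t| ≤ A) :
    t ^ 2 / (t ^ 2 - a ^ 2) ≤ A / (|t| - a) := by
  have hfac : t ^ 2 - a ^ 2 = (|t| - a) * (|t| + a) := by rw [← sq_abs t]; ring
  rw [hfac, div_le_div_iff₀ (mul_pos (by linarith) (by linarith)) (by linarith), ← sq_abs t]
  have hsq : |t| ^ 2 ≤ A * (|t| + a) := by nlinarith [abs_nonneg t]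
  nlinarith [mul_le_mul_of_nonneg_left hsq (sub_nonneg.2 hat.le)]

lemma abs_div_sqrt_sq_sub_sq_rpow_le {a A s t : ℝ} (ha : 0 ≤ a) (hs : 0 < s) (htA : |t| ≤ A) :
    (|t| / √(t ^ 2 - a ^ 2)) ^ (2 * s) ≤ A ^ s * (|t - a| ^ (-s) + |t + a| ^ (-s)) := by
  have hA : 0 ≤ A := (abs_nonneg t).trans htA
  rcases le_or_gt |t| a with hta | hat
  · rw [sqrt_eq_zero'.2 (by nlinarith [sq_abs t, abs_nonneg t]), div_zero,
      zero_rpow (by positivity)]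
    positivity
  calc (|t| / √(t ^ 2 - a ^ 2)) ^ (2 * s)
      = (t ^ 2 / (t ^ 2 - a ^ 2)) ^ s := by
        rw [rpow_mul (by positivity), rpow_two, div_pow, sq_abs,
          sq_sqrt (by nlinarith [sq_abs t])]
    _ ≤ (A / (|t| - a)) ^ s := by
        refine rpow_le_rpow ?_ (sq_div_sq_sub_sq_le ha hat htA) hs.le
        exact div_nonneg (sq_nonneg t) (by nlinarith [sq_abs t])
    _ = A ^ s * (|t| - a) ^ (-s) := by
        rw [div_rpow hA (by linarith), rpow_neg (by linarith), div_eq_mul_inv]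
    _ ≤ A ^ s * (|t - a| ^ (-s) + |t + a| ^ (-s)) := by
        gcongr
        exact sub_rpow_le_abs_sub_rpow_add_abs_add_rpow _ hat.le

lemma measurable_abs_div_sqrt_sq_sub_sq (a : ℝ) :
    Measurable fun t : ℝ => |t| / √(t ^ 2 - a ^ 2) := by
  fun_prop

lemma intervalIntegrable_abs_rpow_neg {s : ℝ} (hs : s < 1) (a b : ℝ) :
    IntervalIntegrable (fun u : ℝ => |u| ^ (-s)) volume a b := by
  refine ((locallyIntegrable_of_norm_le_rpow (μ := volume) (C := 1) (α := s) (by simp)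
    (by simpa using hs) (Filter.Eventually.of_forall fun u => ?_) ?_).integrableOn_isCompact
    isCompact_uIcc).intervalIntegrable
  · simp [abs_rpow_of_nonneg (abs_nonneg u)]
  · exact (measurable_abs.pow_const _).aestronglyMeasurable

lemma intervalIntegrable_abs_sub_rpow_neg {s : ℝ} (hs : s < 1) (c a b : ℝ) :
    IntervalIntegrable (fun u : ℝ => |u - c| ^ (-s)) volume a b := by
  simpa using (intervalIntegrable_abs_rpow_neg hs (a - c) (b - c)).comp_sub_right c

lemma integral_abs_sub_rpow_neg_le {s A c : ℝ} (hs : s < 1) (hc : |c| ≤ A) :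
    ∫ t in (-A)..A, |t - c| ^ (-s) ≤ ∫ u in (-(2 * A))..(2 * A), |u| ^ (-s) := by
  obtain ⟨hc₁, hc₂⟩ := abs_le.1 hc
  rw [integral_comp_sub_right (fun u => |u| ^ (-s))]
  exact integral_mono_interval (by linarith) (by linarith) (by linarith)
    (Filter.Eventually.of_forall fun u => by positivity) (intervalIntegrable_abs_rpow_neg hs _ _)

lemma abs_div_sqrt_sq_sub_sq_rpow_integrableOn_and_integral_le {a A p : ℝ} (ha : 0 ≤ a)
    (haA : a ≤ A) (hp₀ : 0 < p) (hp₂ : p < 2) :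
    IntegrableOn (fun t => (|t| / √(t ^ 2 - a ^ 2)) ^ p) (Ioc (-A) A) ∧
    ∫ t in Ioc (-A) A, (|t| / √(t ^ 2 - a ^ 2)) ^ p ≤
      2 * A ^ (p / 2) * ∫ u in (-(2 * A))..(2 * A), |u| ^ (-(p / 2)) := by
  have hAA : -A ≤ A := by linarith
  have hs₁ : p / 2 < 1 := by linarith
  have hplus : ∀ t : ℝ, |t + a| = |t - -a| := fun t => by rw [sub_neg_eq_add]
  set g := fun t => A ^ (p / 2) * (|t - a| ^ (-(p / 2)) + |t + a| ^ (-(p / 2)))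
  have hg : IntegrableOn g (Ioc (-A) A) := by
    rw [← intervalIntegrable_iff_integrableOn_Ioc_of_le hAA]
    simp only [g, hplus]
    exact ((intervalIntegrable_abs_sub_rpow_neg hs₁ _ _ _).add
      (intervalIntegrable_abs_sub_rpow_neg hs₁ _ _ _)).const_mul _
  have hle : ∀ t ∈ Ioc (-A) A, (|t| / √(t ^ 2 - a ^ 2)) ^ p ≤ g t := fun t ht => by
    simpa only [mul_div_cancel₀ p two_ne_zero] using
      abs_div_sqrt_sq_sub_sq_rpow_le ha (half_pos hp₀) (abs_le.2 ⟨ht.1.le, ht.2⟩)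
  have hint : IntegrableOn (fun t => (|t| / √(t ^ 2 - a ^ 2)) ^ p) (Ioc (-A) A) := by
    refine hg.mono'
      ((measurable_abs_div_sqrt_sq_sub_sq a).pow_const _).aestronglyMeasurable
      ((ae_restrict_iff' measurableSet_Ioc).2 ?_)
    filter_upwards with t ht
    rw [norm_of_nonneg (by positivity)]
    exact hle t ht
  refine ⟨hint, (setIntegral_mono_on hint hg measurableSet_Ioc hle).trans ?_⟩
  rw [← integral_of_le hAA]
  simp only [g, hplus]
  rw [intervalIntegral.integral_const_mul,
    integral_add (intervalIntegrable_abs_sub_rpow_neg hs₁ _ _ _)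
      (intervalIntegrable_abs_sub_rpow_neg hs₁ _ _ _)]
  have h₁ := integral_abs_sub_rpow_neg_le hs₁ (A := A) (c := a) (by rwa [abs_of_nonneg ha])
  have h₂ := integral_abs_sub_rpow_neg_le hs₁ (A := A) (c := -a)
    (by rwa [abs_neg, abs_of_nonneg ha])
  have := rpow_nonneg (ha.trans haA) (p / 2)
  nlinarith

lemma integral_abs_div_sqrt_sq_sub_sq_mul_le {a A p r : ℝ} (hpr : p.HolderConjugate r)
    (hp : p < 2) (ha : 0 ≤ a) (hA : 0 ≤ A) (haA : 2 * a ^ 2 ≤ A ^ 2) {F : ℝ → ℝ}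
    (hF₀ : ∀ t, 0 ≤ F t) (hF : Integrable F)
    (hFr : IntervalIntegrable (fun t => F t ^ r) volume (-A) A)
    (hwF : Integrable fun t => |t| / √(t ^ 2 - a ^ 2) * F t) :
    ∫ t, |t| / √(t ^ 2 - a ^ 2) * F t ≤ √2 * (∫ t, F t) +
      (2 * A ^ (p / 2) * ∫ u in (-(2 * A))..(2 * A), |u| ^ (-(p / 2))) ^ (1 / p) *
        (∫ t in (-A)..A, F t ^ r) ^ (1 / r) := by
  have hAA : -A ≤ A := by linarith
  have haA' : a ≤ A := by nlinarith
  have hw₀ : ∀ t : ℝ, 0 ≤ |t| / √(t ^ 2 - a ^ 2) := fun t => by positivity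
  obtain ⟨hwp, hwp_le⟩ :=
    abs_div_sqrt_sq_sub_sq_rpow_integrableOn_and_integral_le ha haA' hpr.pos hp
  rw [← integral_add_compl (measurableSet_Ioc (a := -A) (b := A)) hwF, add_comm]
  gcongr ?_ + ?_
  · have hfar : ∀ t ∈ (Ioc (-A) A)ᶜ, |t| / √(t ^ 2 - a ^ 2) * F t ≤ √2 * F t := by
      intro t ht
      have hAt : A ≤ |t| := by
        simp only [mem_compl_iff, mem_Ioc, not_and_or, not_lt, not_le] at ht
        rcases ht with ht | ht
        · exact le_abs.2 (Or.inr (by linarith))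
        · exact le_abs.2 (Or.inl ht.le)
      have hA2 : A ^ 2 ≤ t ^ 2 := by simpa only [sq_abs] using pow_le_pow_left₀ hA hAt 2
      exact mul_le_mul_of_nonneg_right
        (abs_div_sqrt_sq_sub_sq_le_sqrt_two (haA.trans hA2)) (hF₀ t)
    calc ∫ t in (Ioc (-A) A)ᶜ, |t| / √(t ^ 2 - a ^ 2) * F t
        ≤ ∫ t in (Ioc (-A) A)ᶜ, √2 * F t :=
          setIntegral_mono_on hwF.integrableOn (hF.integrableOn.const_mul _)
            measurableSet_Ioc.compl hfar
      _ = √2 * ∫ t in (Ioc (-A) A)ᶜ, F t := integral_const_mul _ _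
      _ ≤ √2 * (∫ t, F t) :=
          mul_le_mul_of_nonneg_left (setIntegral_le_integral hF (ae_of_all _ hF₀))
            (sqrt_nonneg 2)
  · rw [integral_of_le hAA]
    rw [intervalIntegrable_iff_integrableOn_Ioc_of_le hAA] at hFr
    calc ∫ t in Ioc (-A) A, |t| / √(t ^ 2 - a ^ 2) * F t
        ≤ (∫ t in Ioc (-A) A, (|t| / √(t ^ 2 - a ^ 2)) ^ p) ^ (1 / p) *
            (∫ t in Ioc (-A) A, F t ^ r) ^ (1 / r) :=
          integral_mul_le_Lp_mul_Lq_of_nonneg hpr (ae_of_all _ hw₀) (ae_of_all _ hF₀)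
            (memLp_ofReal_of_integrable_rpow hpr.pos hw₀
              (measurable_abs_div_sqrt_sq_sub_sq a).aestronglyMeasurable hwp)
            (memLp_ofReal_of_integrable_rpow hpr.symm.pos hF₀ hF.1.restrict hFr)
      _ ≤ _ := by
          gcongr
          · exact rpow_nonneg
              (setIntegral_nonneg measurableSet_Ioc fun t _ => rpow_nonneg (hF₀ t) r) _
          · exact hpr.one_div_nonneg

theorem rho_minus_bound_general (M r : ℝ) (hr : 2 < r) :
    ∃ C > (0:ℝ), ∀ (f : ℝ × ℝ × ℝ → ℝ) (φ : ℝ),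
      Integrable f → (∀ ξ, 0 ≤ f ξ) →
      (∀ a b : ℝ, IntervalIntegrable
          (fun ξ₁ => (∫ ξ' : ℝ × ℝ, f (ξ₁, ξ')) ^ r) volume a b) →
      -M ≤ φ → φ ≤ 0 →
      (∫ ξ : ℝ × ℝ × ℝ,
          f ξ * (|ξ.1| / Real.sqrt (ξ.1 ^ 2 + 2 * φ)) *
            (if 0 < ξ.1 ^ 2 + 2 * φ then (1:ℝ) else 0))
        ≤ Real.sqrt 2 * (∫ ξ : ℝ × ℝ × ℝ, |f ξ|) +
            C * (∫ ξ₁ in (-(2 * Real.sqrt M))..(2 * Real.sqrt M),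
                  (∫ ξ' : ℝ × ℝ, f (ξ₁, ξ')) ^ r) ^ (1 / r) := by
  set p := r.conjExponent
  have hpr : p.HolderConjugate r := (Real.HolderConjugate.conjExponent (by linarith)).symm
  have hp : p < 2 := by
    change r / (r - 1) < 2
    rw [div_lt_iff₀ (by linarith)]
    linarith
  set A := 2 * √M
  set K := (2 * A ^ (p / 2) * ∫ u in (-(2 * A))..(2 * A), |u| ^ (-(p / 2))) ^ (1 / p)
  refine ⟨max K 1, lt_max_of_lt_right one_pos, fun f φ hf hf₀ hFr hφM hφ₀ => ?_⟩
  set a := √(-(2 * φ))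
  have ha : a ^ 2 = -(2 * φ) := sq_sqrt (by linarith)
  have hA : A ^ 2 = 4 * M := by rw [mul_pow, sq_sqrt (by linarith)]; norm_num
  set F := fun t => ∫ y : ℝ × ℝ, f (t, y)
  have hX : 0 ≤ (∫ t in (-A)..A, F t ^ r) ^ (1 / r) :=
    rpow_nonneg (intervalIntegral.integral_nonneg (neg_le_self (by positivity)) fun t _ =>
      rpow_nonneg (integral_nonneg fun y => hf₀ _) r) _
  have hweight : ∀ ξ : ℝ × ℝ × ℝ, f ξ * (|ξ.1| / √(ξ.1 ^ 2 + 2 * φ)) *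
      (if 0 < ξ.1 ^ 2 + 2 * φ then (1:ℝ) else 0) = f ξ * (|ξ.1| / √(ξ.1 ^ 2 - a ^ 2)) := by
    intro ξ
    rw [mul_assoc, div_sqrt_mul_ite_pos, ha, sub_neg_eq_add]
  simp only [hweight, abs_of_nonneg (hf₀ _)]
  by_cases hint : Integrable fun ξ : ℝ × ℝ × ℝ => f ξ * (|ξ.1| / √(ξ.1 ^ 2 - a ^ 2))
  swap
  · rw [integral_undef hint]
    have : 0 ≤ ∫ ξ, f ξ := integral_nonneg hf₀
    positivity
  rw [Measure.volume_eq_prod] at hf hint ⊢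
  obtain ⟨hwF, hfubini⟩ :=
    integral_prod_mul_fst (f := f) (w := fun t => |t| / √(t ^ 2 - a ^ 2)) hint
  rw [hfubini, integral_prod f hf]
  calc _ ≤ √2 * (∫ t, F t) + K * (∫ t in (-A)..A, F t ^ r) ^ (1 / r) :=
        integral_abs_div_sqrt_sq_sub_sq_mul_le hpr hp (sqrt_nonneg _) (by positivity)
          (by linarith) (fun t => integral_nonneg fun y => hf₀ _) hf.integral_prod_left
          (hFr _ _) hwF
    _ ≤ _ := by gcongr; exact le_max_left K 1

theorem rho_minus_bound (M r : ℝ) (hM : 0 < M) (hr : 2 < r) :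
    ∃ C > (0:ℝ), ∀ (f : ℝ × ℝ × ℝ → ℝ) (φ : ℝ),
      Integrable f → (∀ ξ, 0 ≤ f ξ) →
      (∀ a b : ℝ, IntervalIntegrable
          (fun ξ₁ => (∫ ξ' : ℝ × ℝ, f (ξ₁, ξ')) ^ r) volume a b) →
      -M ≤ φ → φ ≤ 0 →
      (∫ ξ : ℝ × ℝ × ℝ,
          f ξ * (|ξ.1| / Real.sqrt (ξ.1 ^ 2 + 2 * φ)) *
            (if 0 < ξ.1 ^ 2 + 2 * φ then (1:ℝ) else 0))
        ≤ Real.sqrt 2 * (∫ ξ : ℝ × ℝ × ℝ, |f ξ|) +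
            C * (∫ ξ₁ in (-(2 * Real.sqrt M))..(2 * Real.sqrt M),
                  (∫ ξ' : ℝ × ℝ, f (ξ₁, ξ')) ^ r) ^ (1 / r) :=
  rho_minus_bound_general M r hr
end
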